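/- arXiv:2401.03135 — 9 statements merged into one kernel-verified Lean document; each statement's English description precedes it below -/
import Mathlib

section
/- Let P be a symmetric positive definite real n×n matrix and G a real n×n matrix, and let exp denote the matrix exponential. The linear group d(s) = exp(sG) is strictly monotone with respect to the weighted Euclidean norm ‖x‖_P = sqrt(xᵀPx), i.e. there exists β > 0 such that ‖exp(sG)x‖_P ≤ e^{βs}·‖x‖_P for all s ≤ 0 and all x ∈ ℝⁿ, if and only if the matrix P·G + Gᵀ·P is positive definite. -/
open Matrix

/-- The weighted Euclidean norm `‖x‖_P = sqrt (xᵀ P x)`. -/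
noncomputable def wnorm {n : ℕ} (P : Matrix (Fin n) (Fin n) ℝ) (x : Fin n → ℝ) : ℝ :=
  Real.sqrt (x ⬝ᵥ P.mulVec x)

section Aux

open NormedSpace

attribute [local instance] Matrix.linftyOpNormedRing Matrix.linftyOpNormedAlgebra

variable {n : ℕ}

/-- quadratic form in the matrix argument, as a continuous linear map -/
noncomputable def quadCLM (x : Fin n → ℝ) : Matrix (Fin n) (Fin n) ℝ →L[ℝ] ℝ :=
  LinearMap.toContinuousLinearMap
    { toFun := fun A => x ⬝ᵥ A.mulVec x
      map_add' := fun A B => by simp [Matrix.add_mulVec]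
      map_smul' := fun c A => by simp [Matrix.smul_mulVec] }

noncomputable def trCLM (n : ℕ) : Matrix (Fin n) (Fin n) ℝ →L[ℝ] Matrix (Fin n) (Fin n) ℝ :=
  LinearMap.toContinuousLinearMap
    { toFun := Matrix.transpose
      map_add' := Matrix.transpose_add
      map_smul' := Matrix.transpose_smul }

lemma quad_conj (A Q : Matrix (Fin n) (Fin n) ℝ) (x : Fin n → ℝ) :
    x ⬝ᵥ (Aᵀ * Q * A).mulVec x = (A.mulVec x) ⬝ᵥ Q.mulVec (A.mulVec x) := by
  rw [Matrix.mul_assoc, ← Matrix.mulVec_mulVec, ← Matrix.mulVec_mulVec,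
    Matrix.dotProduct_mulVec, Matrix.vecMul_transpose]

lemma hasDerivAt_V (P G : Matrix (Fin n) (Fin n) ℝ) (x : Fin n → ℝ) (t : ℝ) :
    HasDerivAt
      (fun s : ℝ => ((exp (s • G)).mulVec x) ⬝ᵥ P.mulVec ((exp (s • G)).mulVec x))
      (((exp (t • G)).mulVec x) ⬝ᵥ (P * G + Gᵀ * P).mulVec ((exp (t • G)).mulVec x))
      t := by
  have hE : HasDerivAt (fun s : ℝ => exp (s • G)) (exp (t • G) * G) t :=
    hasDerivAt_exp_smul_const G t
  set E := exp (t • G) with hEdef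
  have hET : HasDerivAt (fun s : ℝ => (exp (s • G))ᵀ) ((E * G)ᵀ) t := by
    have := (trCLM n).hasFDerivAt.comp_hasDerivAt t hE
    exact this
  have hM : HasDerivAt (fun s : ℝ => (exp (s • G))ᵀ * P * exp (s • G))
      ((E * G)ᵀ * P * E + Eᵀ * P * (E * G)) t := (hET.mul_const P).mul hE
  have hV := (quadCLM x).hasFDerivAt.comp_hasDerivAt t hM
  have hc : E * G = G * E := (((Commute.refl G).smul_left t).exp_left).eq
  have hkey : (E * G)ᵀ * P * E + Eᵀ * P * (E * G) = Eᵀ * (P * G + Gᵀ * P) * E := by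
    rw [hc]
    simp only [Matrix.transpose_mul]
    noncomm_ring
  have hfun : (fun s : ℝ => quadCLM x ((exp (s • G))ᵀ * P * exp (s • G)))
      = fun s : ℝ => ((exp (s • G)).mulVec x) ⬝ᵥ P.mulVec ((exp (s • G)).mulVec x) := by
    funext s
    simp [quadCLM, quad_conj]
  simp only [Function.comp_def] at hV
  rw [hfun] at hV
  have hval : quadCLM x ((E * G)ᵀ * P * E + Eᵀ * P * (E * G))
      = (E.mulVec x) ⬝ᵥ (P * G + Gᵀ * P).mulVec (E.mulVec x) := by
    rw [hkey]
    simp [quadCLM, quad_conj]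
  exact hV.congr_deriv hval

lemma quad_continuous (Q : Matrix (Fin n) (Fin n) ℝ) :
    Continuous fun y : Fin n → ℝ => y ⬝ᵥ Q.mulVec y := by
  simp only [dotProduct, Matrix.mulVec]
  fun_prop

lemma quad_smul (A : Matrix (Fin n) (Fin n) ℝ) (c : ℝ) (v : Fin n → ℝ) :
    (c • v) ⬝ᵥ A.mulVec (c • v) = c ^ 2 * (v ⬝ᵥ A.mulVec v) := by
  rw [Matrix.mulVec_smul, smul_dotProduct, dotProduct_smul,
    smul_eq_mul, smul_eq_mul]
  ring

/-- if `P` and `Q` are positive definite then `Q ⪰ 2βP` for some `β > 0`. -/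
lemma exists_beta (P Q : Matrix (Fin n) (Fin n) ℝ)
    (hP : ∀ x : Fin n → ℝ, x ≠ 0 → 0 < x ⬝ᵥ P.mulVec x)
    (hQ : ∀ x : Fin n → ℝ, x ≠ 0 → 0 < x ⬝ᵥ Q.mulVec x) :
    ∃ β : ℝ, 0 < β ∧ ∀ y : Fin n → ℝ,
      2 * β * (y ⬝ᵥ P.mulVec y) ≤ y ⬝ᵥ Q.mulVec y := by
  by_cases hall : ∀ y : Fin n → ℝ, y = 0
  · exact ⟨1, one_pos, fun y => by simp [hall y]⟩
  push_neg at hall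
  obtain ⟨y0, hy0⟩ := hall
  have hy0n : (0:ℝ) < ‖y0‖ := norm_pos_iff.mpr hy0
  have hmemS : ∀ {y : Fin n → ℝ}, y ≠ 0 → (‖y‖⁻¹ • y) ∈ Metric.sphere (0 : Fin n → ℝ) 1 := by
    intro y hy
    have : (0:ℝ) < ‖y‖ := norm_pos_iff.mpr hy
    simp [norm_smul, abs_of_pos (inv_pos.mpr this), inv_mul_cancel₀ this.ne']
  have hS : (Metric.sphere (0 : Fin n → ℝ) 1).Nonempty := ⟨_, hmemS hy0⟩
  obtain ⟨um, humS, hum⟩ := (isCompact_sphere (0 : Fin n → ℝ) 1).exists_isMinOn hS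
    (quad_continuous Q).continuousOn
  obtain ⟨uM, huMS, huM⟩ := (isCompact_sphere (0 : Fin n → ℝ) 1).exists_isMaxOn hS
    (quad_continuous P).continuousOn
  have hum0 : um ≠ 0 := by
    intro h; rw [Metric.mem_sphere, h] at humS; simp at humS
  have huM0 : uM ≠ 0 := by
    intro h; rw [Metric.mem_sphere, h] at huMS; simp at huMS
  set m := um ⬝ᵥ Q.mulVec um with hm
  set M := uM ⬝ᵥ P.mulVec uM with hM
  have hmpos : 0 < m := hQ um hum0
  have hMpos : 0 < M := hP uM huM0
  refine ⟨m / (2 * M), by positivity, fun y => ?_⟩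
  rcases eq_or_ne y 0 with rfl | hy
  · simp
  have hyn : (0:ℝ) < ‖y‖ := norm_pos_iff.mpr hy
  set u := ‖y‖⁻¹ • y with hu
  have huS := hmemS hy
  have hyu : y = ‖y‖ • u := by
    rw [hu, smul_smul, mul_inv_cancel₀ hyn.ne', one_smul]
  have hQy : y ⬝ᵥ Q.mulVec y = ‖y‖^2 * (u ⬝ᵥ Q.mulVec u) := by
    have := quad_smul Q ‖y‖ u; rw [← hyu] at this; exact this
  have hPy : y ⬝ᵥ P.mulVec y = ‖y‖^2 * (u ⬝ᵥ P.mulVec u) := by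
    have := quad_smul P ‖y‖ u; rw [← hyu] at this; exact this
  have h1 : m ≤ u ⬝ᵥ Q.mulVec u := hum huS
  have h2 : u ⬝ᵥ P.mulVec u ≤ M := huM huS
  rw [hQy, hPy]
  have hyn2 : (0:ℝ) < ‖y‖^2 := by positivity
  have : 2 * (m / (2 * M)) * (u ⬝ᵥ P.mulVec u) ≤ u ⬝ᵥ Q.mulVec u := by
    have h3 : 2 * (m / (2 * M)) * (u ⬝ᵥ P.mulVec u) ≤ 2 * (m / (2 * M)) * M := by
      have : 0 < 2 * (m / (2 * M)) := by positivity
      nlinarith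
    have h4 : 2 * (m / (2 * M)) * M = m := by field_simp
    linarith
  nlinarith

end Aux

/-- the dilation `d(s) = exp (s G)` is strictly monotone w.r.t. `‖·‖_P`
iff `P G + Gᵀ P ≻ 0`. -/
theorem stmt_0 {n : ℕ} (P G : Matrix (Fin n) (Fin n) ℝ)
    (hPsym : P.IsSymm)
    (hPpd : ∀ x : Fin n → ℝ, x ≠ 0 → 0 < x ⬝ᵥ P.mulVec x) :
    (∃ β : ℝ, 0 < β ∧ ∀ s : ℝ, s ≤ 0 → ∀ x : Fin n → ℝ,
        wnorm P ((NormedSpace.exp (s • G)).mulVec x) ≤ Real.exp (β * s) * wnorm P x)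
      ↔ (∀ x : Fin n → ℝ, x ≠ 0 → 0 < x ⬝ᵥ (P * G + Gᵀ * P).mulVec x) := by
  have hVnn : ∀ z : Fin n → ℝ, 0 ≤ z ⬝ᵥ P.mulVec z := by
    intro z
    rcases eq_or_ne z 0 with rfl | hz
    · simp
    · exact (hPpd z hz).le
  have hE0 : NormedSpace.exp ((0:ℝ) • G) = (1 : Matrix (Fin n) (Fin n) ℝ) := by
    rw [zero_smul]; exact NormedSpace.exp_zero
  constructor
  · rintro ⟨β, hβ, hmono⟩ x hx
    set Q := P * G + Gᵀ * P with hQdef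
    set V : ℝ → ℝ := fun s =>
      ((NormedSpace.exp (s • G)).mulVec x) ⬝ᵥ P.mulVec ((NormedSpace.exp (s • G)).mulVec x)
      with hVdef
    have hV0 : V 0 = x ⬝ᵥ P.mulVec x := by simp [hVdef, hE0]
    have hV0pos : 0 < V 0 := hV0 ▸ hPpd x hx
    -- squared inequality
    have hsq : ∀ s : ℝ, s ≤ 0 → V s ≤ Real.exp (2 * β * s) * V 0 := by
      intro s hs
      have h1 := hmono s hs x
      have h2 : Real.sqrt (V s) ≤ Real.exp (β * s) * Real.sqrt (V 0) := by
        rw [hV0]; exact h1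
      have h3 : V s = Real.sqrt (V s) ^ 2 := (Real.sq_sqrt (hVnn _)).symm
      have h4 : Real.sqrt (V s) ^ 2 ≤ (Real.exp (β * s) * Real.sqrt (V 0)) ^ 2 := by
        apply pow_le_pow_left₀ (Real.sqrt_nonneg _) h2
      have h5 : (Real.exp (β * s) * Real.sqrt (V 0)) ^ 2 = Real.exp (2 * β * s) * V 0 := by
        rw [mul_pow, Real.sq_sqrt (hVnn _), sq, ← Real.exp_add]
        ring_nf
        rfl
      calc V s = Real.sqrt (V s) ^ 2 := h3
        _ ≤ (Real.exp (β * s) * Real.sqrt (V 0)) ^ 2 := h4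
        _ = Real.exp (2 * β * s) * V 0 := h5
    -- derivative at 0
    have hD : HasDerivAt V (x ⬝ᵥ Q.mulVec x) 0 := by
      have := hasDerivAt_V P G x 0
      simpa [hVdef, hE0, hQdef] using this
    set D := x ⬝ᵥ Q.mulVec x with hDdef
    set W : ℝ → ℝ := fun s => Real.exp (2 * β * s) * V 0 - V s with hWdef
    have hWd : HasDerivAt W (2 * β * V 0 - D) 0 := by
      have he : HasDerivAt (fun s : ℝ => Real.exp (2 * β * s) * V 0)
          (2 * β * V 0) 0 := by
        have : HasDerivAt (fun s : ℝ => Real.exp (2 * β * s)) (Real.exp (2*β*0) * (2*β)) 0 := by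
          exact (Real.hasDerivAt_exp _).comp 0 (by simpa using (hasDerivAt_id (0:ℝ)).const_mul (2*β))
        have := this.mul_const (V 0)
        simpa [mul_comm, mul_assoc] using this
      exact he.sub hD
    have hW0 : W 0 = 0 := by simp [hWdef]
    have hWnn : ∀ s : ℝ, s < 0 → 0 ≤ W s := by
      intro s hs
      have := hsq s hs.le
      simp only [hWdef]
      linarith
    -- derivative at 0 from the left is ≤ 0
    have hle : 2 * β * V 0 - D ≤ 0 := by
      rw [hasDerivAt_iff_tendsto_slope] at hWd
      have hmonoL : (nhdsWithin (0:ℝ) (Set.Iio 0)) ≤ (nhdsWithin (0:ℝ) {(0:ℝ)}ᶜ) :=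
        nhdsWithin_mono 0 fun s hs => ne_of_lt hs
      have hW2 := hWd.mono_left hmonoL
      refine le_of_tendsto hW2 ?_
      filter_upwards [self_mem_nhdsWithin] with s hs
      have hs' : s < 0 := hs
      have : slope W 0 s = W s / s := by
        simp [slope, hW0, div_eq_inv_mul]
      rw [this]
      exact div_nonpos_of_nonneg_of_nonpos (hWnn s hs') hs'.le
    have : 0 < 2 * β * V 0 := by positivity
    linarith
  · intro hQpd
    set Q := P * G + Gᵀ * P with hQdef
    obtain ⟨β, hβ, hβle⟩ := exists_beta P Q hPpd hQpd
    refine ⟨β, hβ, fun s hs x => ?_⟩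
    set V : ℝ → ℝ := fun s =>
      ((NormedSpace.exp (s • G)).mulVec x) ⬝ᵥ P.mulVec ((NormedSpace.exp (s • G)).mulVec x)
      with hVdef
    have hV0 : V 0 = x ⬝ᵥ P.mulVec x := by simp [hVdef, hE0]
    set g : ℝ → ℝ := fun s => Real.exp (-(2*β) * s) * V s with hgdef
    have hgd : ∀ t : ℝ, HasDerivAt g
        (Real.exp (-(2*β) * t) * (((NormedSpace.exp (t • G)).mulVec x) ⬝ᵥ
            Q.mulVec ((NormedSpace.exp (t • G)).mulVec x))
          + (-(2*β)) * Real.exp (-(2*β) * t) * V t) t := by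
      intro t
      have he : HasDerivAt (fun u : ℝ => Real.exp (-(2*β) * u))
          (Real.exp (-(2*β)*t) * (-(2*β))) t :=
        (Real.hasDerivAt_exp _).comp t
          (by simpa only [mul_one, id_eq] using (hasDerivAt_id t).const_mul (-(2*β)))
      have hVd : HasDerivAt V (((NormedSpace.exp (t • G)).mulVec x) ⬝ᵥ
          Q.mulVec ((NormedSpace.exp (t • G)).mulVec x)) t := by
        simpa [hVdef, hQdef] using hasDerivAt_V P G x t
      have := he.mul hVd
      exact this.congr_deriv (by ring)
    have hg' : ∀ t : ℝ, 0 ≤ deriv g t := by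
      intro t
      rw [(hgd t).deriv]
      set y := (NormedSpace.exp (t • G)).mulVec x with hy
      have h1 : 2 * β * (y ⬝ᵥ P.mulVec y) ≤ y ⬝ᵥ Q.mulVec y := hβle y
      have h2 : (0:ℝ) < Real.exp (-(2*β) * t) := Real.exp_pos _
      have hVt : V t = y ⬝ᵥ P.mulVec y := rfl
      rw [hVt]
      nlinarith [mul_le_mul_of_nonneg_left h1 h2.le]
    have hgmono : Monotone g := monotone_of_deriv_nonneg (fun t => (hgd t).differentiableAt) hg'
    have hgs : g s ≤ g 0 := hgmono hs
    have hg0 : g 0 = V 0 := by simp [hgdef]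
    have hVs : V s ≤ Real.exp (2 * β * s) * V 0 := by
      have h2 : (0:ℝ) < Real.exp (-(2*β) * s) := Real.exp_pos _
      have h3 : Real.exp (-(2*β) * s) * V s ≤ V 0 := hg0 ▸ hgs
      have h4 : Real.exp (-(2*β)*s) * Real.exp (2*β*s) = 1 := by
        rw [← Real.exp_add]; norm_num
      have h5 := mul_le_mul_of_nonneg_left h3 (Real.exp_nonneg (2*β*s))
      rw [← mul_assoc, mul_comm (Real.exp (2*β*s)) (Real.exp (-(2*β)*s)), h4, one_mul] at h5
      exact h5
    -- take square roots
    have : wnorm P ((NormedSpace.exp (s • G)).mulVec x) = Real.sqrt (V s) := rfl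
    rw [this]
    have hwx : wnorm P x = Real.sqrt (V 0) := by rw [wnorm, hV0]
    rw [hwx]
    calc Real.sqrt (V s) ≤ Real.sqrt (Real.exp (2*β*s) * V 0) := Real.sqrt_le_sqrt hVs
      _ = Real.exp (β * s) * Real.sqrt (V 0) := by
          rw [Real.sqrt_mul (Real.exp_nonneg _)]
          congr 1
          rw [show (2:ℝ)*β*s = (β*s) + (β*s) by ring, Real.exp_add, ← Real.sqrt_mul_self (Real.exp_nonneg _)]
          simp [Real.sqrt_mul_self (Real.exp_nonneg _)]
end

section
/- Let P be a symmetric positive definite real n×n matrix, G a real n×n matrix, and α, β real numbers such that 2β·P ⪯ P·G + Gᵀ·P ⪯ 2α·P (in the Loewner order). Then for every s ≥ 0 and every x ∈ ℝⁿ one has e^{βs}·‖x‖_P ≤ ‖exp(sG)x‖_P ≤ e^{αs}·‖x‖_P, and for every s ≤ 0 one has e^{αs}·‖x‖_P ≤ ‖exp(sG)x‖_P ≤ e^{βs}·‖x‖_P. -/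
open Matrix

attribute [local instance] Matrix.linftyOpNormedAddCommGroup Matrix.linftyOpNormedRing
  Matrix.linftyOpNormedAlgebra

private lemma aux_sqrt_le (c a b : ℝ) (h : b ≤ Real.exp (2 * c) * a) :
    Real.sqrt b ≤ Real.exp c * Real.sqrt a := by
  have he : Real.exp c * Real.sqrt a = Real.sqrt (Real.exp (2 * c) * a) := by
    rw [Real.sqrt_mul (Real.exp_nonneg _),
      show Real.exp (2 * c) = Real.exp c ^ 2 by rw [sq, ← Real.exp_add]; ring_nf,
      Real.sqrt_sq (Real.exp_nonneg _)]
  rw [he]; exact Real.sqrt_le_sqrt h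

private lemma aux_sqrt_ge (c a b : ℝ) (h : Real.exp (2 * c) * a ≤ b) :
    Real.exp c * Real.sqrt a ≤ Real.sqrt b := by
  have he : Real.exp c * Real.sqrt a = Real.sqrt (Real.exp (2 * c) * a) := by
    rw [Real.sqrt_mul (Real.exp_nonneg _),
      show Real.exp (2 * c) = Real.exp c ^ 2 by rw [sq, ← Real.exp_add]; ring_nf,
      Real.sqrt_sq (Real.exp_nonneg _)]
  rw [he]; exact Real.sqrt_le_sqrt h

private lemma flip_le (c a b : ℝ) (h : Real.exp (-c) * a ≤ b) : a ≤ Real.exp c * b := by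
  have h2 := mul_le_mul_of_nonneg_left h (Real.exp_nonneg c)
  rwa [← mul_assoc, ← Real.exp_add, add_neg_cancel, Real.exp_zero, one_mul] at h2

private lemma flip_ge (c a b : ℝ) (h : b ≤ Real.exp (-c) * a) : Real.exp c * b ≤ a := by
  have h2 := mul_le_mul_of_nonneg_left h (Real.exp_nonneg c)
  rwa [← mul_assoc, ← Real.exp_add, add_neg_cancel, Real.exp_zero, one_mul] at h2

/-- `M ↦ M *ᵥ x` as a linear map. -/
private def mulVecL {n : ℕ} (x : Fin n → ℝ) : Matrix (Fin n) (Fin n) ℝ →ₗ[ℝ] (Fin n → ℝ) where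
  toFun M := M.mulVec x
  map_add' A B := Matrix.add_mulVec A B x
  map_smul' c A := Matrix.smul_mulVec c A x

/-- two-sided exponential estimates for the dilation `d(s) = exp (s G)`
under the Loewner bounds `2β P ⪯ P G + Gᵀ P ⪯ 2α P`. -/
theorem stmt_1 {n : ℕ} (P G : Matrix (Fin n) (Fin n) ℝ) (α β : ℝ)
    (hPsym : P.IsSymm)
    (hPpd : ∀ x : Fin n → ℝ, x ≠ 0 → 0 < x ⬝ᵥ P.mulVec x)
    (hlow : ∀ x : Fin n → ℝ, 0 ≤ x ⬝ᵥ ((P * G + Gᵀ * P) - (2 * β) • P).mulVec x)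
    (hup : ∀ x : Fin n → ℝ, 0 ≤ x ⬝ᵥ ((2 * α) • P - (P * G + Gᵀ * P)).mulVec x) :
    (∀ s : ℝ, 0 ≤ s → ∀ x : Fin n → ℝ,
        Real.exp (β * s) * wnorm P x ≤ wnorm P ((NormedSpace.exp (s • G)).mulVec x) ∧
        wnorm P ((NormedSpace.exp (s • G)).mulVec x) ≤ Real.exp (α * s) * wnorm P x) ∧
    (∀ s : ℝ, s ≤ 0 → ∀ x : Fin n → ℝ,
        Real.exp (α * s) * wnorm P x ≤ wnorm P ((NormedSpace.exp (s • G)).mulVec x) ∧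
        wnorm P ((NormedSpace.exp (s • G)).mulVec x) ≤ Real.exp (β * s) * wnorm P x) := by
  classical
  -- derivative of the matrix exponential
  have hM : ∀ s : ℝ, HasDerivAt (fun u : ℝ => NormedSpace.exp (u • G))
      (G * NormedSpace.exp (s • G)) s := fun s => hasDerivAt_exp_smul_const' G s
  -- main estimate on the quadratic form, for a fixed vector x
  have key : ∀ x : Fin n → ℝ, ∀ s t : ℝ, s ≤ t →
      (Real.exp (-(2 * α) * t) * ((NormedSpace.exp (t • G)).mulVec x ⬝ᵥ
          P.mulVec ((NormedSpace.exp (t • G)).mulVec x)) ≤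
        Real.exp (-(2 * α) * s) * ((NormedSpace.exp (s • G)).mulVec x ⬝ᵥ
          P.mulVec ((NormedSpace.exp (s • G)).mulVec x))) ∧
      (Real.exp (-(2 * β) * s) * ((NormedSpace.exp (s • G)).mulVec x ⬝ᵥ
          P.mulVec ((NormedSpace.exp (s • G)).mulVec x)) ≤
        Real.exp (-(2 * β) * t) * ((NormedSpace.exp (t • G)).mulVec x ⬝ᵥ
          P.mulVec ((NormedSpace.exp (t • G)).mulVec x))) := by
    intro x s t hst
    set y : ℝ → (Fin n → ℝ) := fun u => (NormedSpace.exp (u • G)).mulVec x with hy_def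
    set V : ℝ → ℝ := fun u => y u ⬝ᵥ P.mulVec (y u) with hV_def
    have hy : ∀ u : ℝ, HasDerivAt y (G.mulVec (y u)) u := by
      intro u
      have h1 := (LinearMap.toContinuousLinearMap (mulVecL x)).hasFDerivAt.comp_hasDerivAt
        u (hM u)
      have h2 : (LinearMap.toContinuousLinearMap (mulVecL x)) (G * NormedSpace.exp (u • G))
          = G.mulVec (y u) := by
        rw [LinearMap.coe_toContinuousLinearMap']
        simp [mulVecL, hy_def, ← Matrix.mulVec_mulVec]
      replace h1 := h1.congr_deriv h2
      have h3 : (⇑(LinearMap.toContinuousLinearMap (mulVecL x)) ∘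
          fun u : ℝ => NormedSpace.exp (u • G)) = y := by
        funext v
        simp [mulVecL, hy_def]
      rwa [h3] at h1
    -- derivative of V
    have hV : ∀ u : ℝ, HasDerivAt V
        (y u ⬝ᵥ ((P * G + Gᵀ * P).mulVec (y u))) u := by
      intro u
      have hyc : ∀ i, HasDerivAt (fun v => y v i) (G.mulVec (y u) i) u :=
        fun i => hasDerivAt_pi.mp (hy u) i
      have hsum : HasDerivAt (fun v => ∑ i, y v i * ∑ j, P i j * y v j)
          (∑ i, (G.mulVec (y u) i * ∑ j, P i j * y u j +
            y u i * ∑ j, P i j * G.mulVec (y u) j)) u := by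
        apply HasDerivAt.fun_sum
        intro i _
        exact (hyc i).mul (HasDerivAt.fun_sum fun j _ => (hyc j).const_mul (P i j))
      have hfun : (fun v => ∑ i, y v i * ∑ j, P i j * y v j) = V := by
        funext v
        simp [hV_def, dotProduct, Matrix.mulVec]
      rw [hfun] at hsum
      have hder : (∑ i, (G.mulVec (y u) i * ∑ j, P i j * y u j +
            y u i * ∑ j, P i j * G.mulVec (y u) j))
          = y u ⬝ᵥ ((P * G + Gᵀ * P).mulVec (y u)) := by
        have e1 : (∑ i, (G.mulVec (y u) i * ∑ j, P i j * y u j +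
              y u i * ∑ j, P i j * G.mulVec (y u) j))
            = (G.mulVec (y u)) ⬝ᵥ P.mulVec (y u) + y u ⬝ᵥ P.mulVec (G.mulVec (y u)) := by
          simp [dotProduct, Matrix.mulVec, Finset.sum_add_distrib]
        rw [e1, Matrix.add_mulVec, dotProduct_add, ← Matrix.mulVec_mulVec,
          ← Matrix.mulVec_mulVec, Matrix.dotProduct_mulVec (y u) Gᵀ, Matrix.vecMul_transpose]
        ring_nf
      rw [hder] at hsum
      exact hsum
    -- derivative bounds
    have hVub : ∀ u, y u ⬝ᵥ ((P * G + Gᵀ * P).mulVec (y u)) ≤ 2 * α * V u := by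
      intro u
      have h := hup (y u)
      rw [Matrix.sub_mulVec, dotProduct_sub, Matrix.smul_mulVec,
        dotProduct_smul] at h
      simp only [smul_eq_mul] at h
      linarith
    have hVlb : ∀ u, 2 * β * V u ≤ y u ⬝ᵥ ((P * G + Gᵀ * P).mulVec (y u)) := by
      intro u
      have h := hlow (y u)
      rw [Matrix.sub_mulVec, dotProduct_sub, Matrix.smul_mulVec,
        dotProduct_smul] at h
      simp only [smul_eq_mul] at h
      linarith
    -- Gronwall via monotonicity
    have hg : ∀ c : ℝ, ∀ u : ℝ, HasDerivAt (fun v => Real.exp (-(2 * c) * v) * V v)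
        (Real.exp (-(2 * c) * u) * (-(2 * c)) * V u + Real.exp (-(2 * c) * u) *
          (y u ⬝ᵥ ((P * G + Gᵀ * P).mulVec (y u)))) u := by
      intro c u
      have h1 : HasDerivAt (fun v : ℝ => Real.exp (-(2 * c) * v))
          (Real.exp (-(2 * c) * u) * (-(2 * c))) u := by
        simpa using ((hasDerivAt_id u).const_mul (-(2 * c))).exp
      exact h1.mul (hV u)
    constructor
    · have hanti : Antitone (fun v => Real.exp (-(2 * α) * v) * V v) := by
        apply antitone_of_deriv_nonpos
        · exact fun u => ((hg α u).differentiableAt)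
        · intro u
          rw [(hg α u).deriv]
          have h1 := hVub u
          have h2 := (Real.exp_pos (-(2 * α) * u)).le
          nlinarith [mul_le_mul_of_nonneg_left h1 h2]
      exact hanti hst
    · have hmono : Monotone (fun v => Real.exp (-(2 * β) * v) * V v) := by
        apply monotone_of_deriv_nonneg
        · exact fun u => ((hg β u).differentiableAt)
        · intro u
          rw [(hg β u).deriv]
          have h1 := hVlb u
          have h2 := (Real.exp_pos (-(2 * β) * u)).le
          nlinarith [mul_le_mul_of_nonneg_left h1 h2]
      exact hmono hst
  -- value at 0
  have hy0 : ∀ x : Fin n → ℝ, (NormedSpace.exp ((0 : ℝ) • G)).mulVec x = x := by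
    intro x
    simp [NormedSpace.exp_zero]
  constructor
  · intro s hs x
    obtain ⟨h1, h2⟩ := key x 0 s hs
    rw [hy0 x] at h1 h2
    simp only [mul_zero, Real.exp_zero, one_mul] at h1 h2
    rw [show -(2 * α) * s = -(2 * (α * s)) by ring] at h1
    rw [show -(2 * β) * s = -(2 * (β * s)) by ring] at h2
    exact ⟨aux_sqrt_ge (β * s) _ _ (flip_ge _ _ _ h2),
      aux_sqrt_le (α * s) _ _ (flip_le _ _ _ h1)⟩
  · intro s hs x
    obtain ⟨h1, h2⟩ := key x s 0 hs
    rw [hy0 x] at h1 h2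
    simp only [mul_zero, Real.exp_zero, one_mul] at h1 h2
    rw [show -(2 * α) * s = -(2 * (α * s)) by ring] at h1
    rw [show -(2 * β) * s = -(2 * (β * s)) by ring] at h2
    exact ⟨aux_sqrt_ge (α * s) _ _ (flip_ge _ _ _ h1),
      aux_sqrt_le (β * s) _ _ (flip_le _ _ _ h2)⟩
end

section
/- Let P be a symmetric positive definite real n×n matrix and G a real n×n matrix such that P·G + Gᵀ·P ⪰ 2β·P for some β > 0. Then for every x ∈ ℝⁿ with x ≠ 0 there exists a unique s ∈ ℝ such that ‖exp(−sG)x‖_P = 1; consequently the canonical homogeneous norm ‖x‖_d := e^{s} is a well-defined single-valued function on ℝⁿ∖{0}. -/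
open Matrix

private lemma quad_key {n : ℕ} (G P : Matrix (Fin n) (Fin n) ℝ) (w : Fin n → ℝ) :
    (-(G.mulVec w)) ⬝ᵥ P.mulVec w + w ⬝ᵥ P.mulVec (-(G.mulVec w))
      = -(w ⬝ᵥ (P * G + Gᵀ * P).mulVec w) := by
  rw [neg_dotProduct, Matrix.mulVec_neg, dotProduct_neg, Matrix.mulVec_mulVec,
    add_mulVec, dotProduct_add]
  rw [show G.mulVec w = Matrix.vecMul w Gᵀ from by
    rw [← Matrix.mulVec_transpose, transpose_transpose]]
  rw [Matrix.dotProduct_mulVec (Matrix.vecMul w Gᵀ) P w, Matrix.vecMul_vecMul,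
    ← Matrix.dotProduct_mulVec]
  ring

/-- if `P G + Gᵀ P ⪰ 2β P` with `β > 0`, then for every `x ≠ 0` there is a
unique `s ∈ ℝ` with `‖exp (-s G) x‖_P = 1`; hence the canonical homogeneous norm
`‖x‖_d = e^s` is a well-defined single-valued function on `ℝⁿ ∖ {0}`. -/
theorem stmt_2 {n : ℕ} (P G : Matrix (Fin n) (Fin n) ℝ) (β : ℝ) (hβ : 0 < β)
    (hPsym : P.IsSymm)
    (hPpd : ∀ x : Fin n → ℝ, x ≠ 0 → 0 < x ⬝ᵥ P.mulVec x)
    (hlow : ∀ x : Fin n → ℝ, 0 ≤ x ⬝ᵥ ((P * G + Gᵀ * P) - (2 * β) • P).mulVec x) :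
    ∀ x : Fin n → ℝ, x ≠ 0 →
      ∃! s : ℝ, wnorm P ((NormedSpace.exp ((-s) • G)).mulVec x) = 1 := by
  letI : SeminormedRing (Matrix (Fin n) (Fin n) ℝ) := Matrix.linftyOpSemiNormedRing
  letI : NormedRing (Matrix (Fin n) (Fin n) ℝ) := Matrix.linftyOpNormedRing
  letI : NormedAlgebra ℝ (Matrix (Fin n) (Fin n) ℝ) := Matrix.linftyOpNormedAlgebra
  intro x hx
  set A : Matrix (Fin n) (Fin n) ℝ := P * G + Gᵀ * P with hA
  set y : ℝ → (Fin n → ℝ) := fun s => (NormedSpace.exp ((-s) • G)).mulVec x with hy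
  have hy0 : ∀ s, y s ≠ 0 := by
    intro s hzero
    apply hx
    have h1 : NormedSpace.exp (s • G) * NormedSpace.exp ((-s) • G) = 1 := by
      rw [← Matrix.exp_add_of_commute]
      · simp
      · exact ((Commute.refl G).smul_left s).smul_right (-s)
    calc x = (NormedSpace.exp (s • G) * NormedSpace.exp ((-s) • G)).mulVec x := by
            rw [h1, Matrix.one_mulVec]
      _ = (NormedSpace.exp (s • G)).mulVec (y s) := by rw [← Matrix.mulVec_mulVec]
      _ = 0 := by rw [hzero, Matrix.mulVec_zero]
  set g : ℝ → ℝ := fun s => y s ⬝ᵥ P.mulVec (y s) with hgdef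
  have gpos : ∀ s, 0 < g s := fun s => hPpd _ (hy0 s)
  have hE : ∀ t : ℝ, HasDerivAt (fun s : ℝ => NormedSpace.exp ((-s) • G))
      (-(G * NormedSpace.exp ((-t) • G))) t := by
    intro t
    have h := hasDerivAt_exp_smul_const' (𝕂 := ℝ) (-G) t
    simp only [smul_neg, ← neg_smul, neg_mul] at h
    exact h
  let L : Matrix (Fin n) (Fin n) ℝ →ₗ[ℝ] (Fin n → ℝ) :=
    { toFun := fun M => M.mulVec x
      map_add' := fun M N => Matrix.add_mulVec M N x
      map_smul' := fun c M => by simp [Matrix.smul_mulVec] }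
  have hY : ∀ t : ℝ, HasDerivAt y (-(G.mulVec (y t))) t := by
    intro t
    have h2 := (LinearMap.toContinuousLinearMap L).hasFDerivAt.comp_hasDerivAt t (hE t)
    have e1 : (⇑(LinearMap.toContinuousLinearMap L)) ∘
        (fun s : ℝ => NormedSpace.exp ((-s) • G)) = y := rfl
    have e2 : (LinearMap.toContinuousLinearMap L) (-(G * NormedSpace.exp ((-t) • G)))
        = -(G.mulVec (y t)) := by
      show (-(G * NormedSpace.exp ((-t) • G))).mulVec x = _
      rw [Matrix.neg_mulVec, ← Matrix.mulVec_mulVec]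
    rw [e1] at h2
    exact h2.congr_deriv e2
  have hg : ∀ t : ℝ, HasDerivAt g (-(y t ⬝ᵥ A.mulVec (y t))) t := by
    intro t
    have hYi : ∀ i, HasDerivAt (fun s => y s i) ((-(G.mulVec (y t))) i) t := fun i =>
      (hasDerivAt_pi.mp (hY t)) i
    have hsum : HasDerivAt (fun s => ∑ i, ∑ j, y s i * (P i j * y s j))
        (∑ i, ∑ j, ((-(G.mulVec (y t))) i * (P i j * y t j)
          + y t i * (P i j * (-(G.mulVec (y t))) j))) t := by
      apply HasDerivAt.fun_sum
      intro i _
      apply HasDerivAt.fun_sum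
      intro j _
      exact (hYi i).mul ((hYi j).const_mul (P i j))
    have hfun : g = fun s => ∑ i, ∑ j, y s i * (P i j * y s j) := by
      funext s
      simp only [hgdef, dotProduct, Matrix.mulVec, Finset.mul_sum]
    have hval : (∑ i, ∑ j, ((-(G.mulVec (y t))) i * (P i j * y t j)
          + y t i * (P i j * (-(G.mulVec (y t))) j)))
        = (-(G.mulVec (y t))) ⬝ᵥ P.mulVec (y t) + y t ⬝ᵥ P.mulVec (-(G.mulVec (y t))) := by
      simp only [dotProduct, Matrix.mulVec, Finset.mul_sum, ← Finset.sum_add_distrib]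
    have total : (∑ i, ∑ j, ((-(G.mulVec (y t))) i * (P i j * y t j)
          + y t i * (P i j * (-(G.mulVec (y t))) j))) = -(y t ⬝ᵥ A.mulVec (y t)) := by
      rw [hval, hA]
      exact quad_key G P (y t)
    rw [hfun, ← total]
    exact hsum
  have hgb : ∀ t : ℝ, -(y t ⬝ᵥ A.mulVec (y t)) ≤ -((2 * β) * g t) := by
    intro t
    have h0 := hlow (y t)
    rw [sub_mulVec, dotProduct_sub, Matrix.smul_mulVec, dotProduct_smul] at h0
    simp only [smul_eq_mul] at h0
    linarith
  set h : ℝ → ℝ := fun s => Real.log (g s) with hhdef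
  set hd : ℝ → ℝ := fun t => (g t)⁻¹ * (-(y t ⬝ᵥ A.mulVec (y t))) with hddef
  have hh : ∀ t : ℝ, HasDerivAt h (hd t) t := fun t =>
    (Real.hasDerivAt_log (ne_of_gt (gpos t))).comp t (hg t)
  have hdle : ∀ t : ℝ, hd t ≤ -(2 * β) := by
    intro t
    have h1 : -(y t ⬝ᵥ A.mulVec (y t)) ≤ g t * -(2 * β) := by
      have := hgb t; linarith
    calc hd t ≤ (g t)⁻¹ * (g t * -(2 * β)) :=
          mul_le_mul_of_nonneg_left h1 (le_of_lt (inv_pos.mpr (gpos t)))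
      _ = -(2 * β) := inv_mul_cancel_left₀ (ne_of_gt (gpos t)) _
  have hanti : StrictAnti h :=
    strictAnti_of_hasDerivAt_neg hh (fun t => lt_of_le_of_lt (hdle t) (by linarith))
  have hk : Antitone (fun s => h s + s * (2 * β)) := by
    apply antitone_of_hasDerivAt_nonpos (f' := fun t => hd t + 2 * β)
    · intro t
      exact (hh t).add (hasDerivAt_mul_const (2 * β))
    · exact fun t => by simpa using (by linarith [hdle t] : hd t + 2 * β ≤ 0)
  have hcont : Continuous h :=
    continuous_iff_continuousAt.mpr fun t => (hh t).continuousAt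
  set c : ℝ := h 0 / (2 * β) with hc
  set b : ℝ := max 0 c with hb
  set a : ℝ := min 0 c with ha
  have hab : a ≤ b := le_trans (min_le_left _ _) (le_max_left _ _)
  have h2β : (0:ℝ) < 2 * β := by linarith
  have hcb : c * (2 * β) = h 0 := div_mul_cancel₀ _ (ne_of_gt h2β)
  have hhb : h b ≤ 0 := by
    have h3 := hk (le_max_left 0 c)
    have hbc : c * (2 * β) ≤ b * (2 * β) :=
      mul_le_mul_of_nonneg_right (le_max_right 0 c) (le_of_lt h2β)
    simp only [zero_mul, add_zero] at h3
    rw [hcb] at hbc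
    linarith
  have hha : 0 ≤ h a := by
    have h3 := hk (min_le_left 0 c)
    have hac : a * (2 * β) ≤ c * (2 * β) :=
      mul_le_mul_of_nonneg_right (min_le_right 0 c) (le_of_lt h2β)
    simp only [zero_mul, add_zero] at h3
    rw [hcb] at hac
    linarith
  have hmem : (0:ℝ) ∈ Set.Icc (h b) (h a) := ⟨hhb, hha⟩
  obtain ⟨s, _, hs⟩ := intermediate_value_Icc' hab hcont.continuousOn hmem
  have hchar : ∀ t : ℝ, wnorm P (y t) = 1 ↔ h t = 0 := by
    intro t
    constructor
    · intro hw
      have hgt : g t = 1 := by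
        have h1 : Real.sqrt (g t) = 1 := hw
        have h2 := Real.sq_sqrt (le_of_lt (gpos t))
        rw [h1] at h2
        nlinarith [h2]
      show Real.log (g t) = 0
      rw [hgt, Real.log_one]
    · intro h0
      have hgt : g t = 1 := by
        have h1 := Real.exp_log (gpos t)
        rw [show Real.log (g t) = h t from rfl, h0, Real.exp_zero] at h1
        exact h1.symm
      show Real.sqrt (g t) = 1
      rw [hgt, Real.sqrt_one]
  refine ⟨s, ?_, ?_⟩
  · exact (hchar s).mpr hs
  · intro s' hs'
    exact hanti.injective (((hchar s').mp hs').trans hs.symm)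
end

section
/- Let P be a symmetric positive definite real n×n matrix, G a real n×n matrix, and 0 < β ≤ α real numbers with 2β·P ⪯ P·G + Gᵀ·P ⪯ 2α·P. Let x ∈ ℝⁿ, x ≠ 0, and let s ∈ ℝ satisfy ‖exp(−sG)x‖_P = 1 (so that the canonical homogeneous norm is ‖x‖_d = e^{s}). Then: if ‖x‖_d ≤ 1 (i.e. s ≤ 0) one has ‖x‖_d^{α} ≤ ‖x‖_P ≤ ‖x‖_d^{β}, and if ‖x‖_d ≥ 1 (i.e. s ≥ 0) one has ‖x‖_d^{β} ≤ ‖x‖_P ≤ ‖x‖_d^{α}. -/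
open Matrix

private lemma exp_entry_hasDerivAt {n : ℕ} (G : Matrix (Fin n) (Fin n) ℝ) (t : ℝ)
    (i j : Fin n) :
    HasDerivAt (fun u : ℝ => NormedSpace.exp (u • G) i j)
      ((G * NormedSpace.exp (t • G)) i j) t := by
  letI : SeminormedRing (Matrix (Fin n) (Fin n) ℝ) := Matrix.linftyOpSemiNormedRing
  letI : NormedRing (Matrix (Fin n) (Fin n) ℝ) := Matrix.linftyOpNormedRing
  letI : NormedAlgebra ℝ (Matrix (Fin n) (Fin n) ℝ) := Matrix.linftyOpNormedAlgebra
  have h := hasDerivAt_exp_smul_const' (𝕂 := ℝ) G t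
  have hL := (LinearMap.toContinuousLinearMap
      (Matrix.entryLinearMap ℝ ℝ i j)).hasFDerivAt
      (x := NormedSpace.exp (t • G))
  exact (hL.comp_hasDerivAt t h)

private lemma exp_mulVec_ne_zero {n : ℕ} (A : Matrix (Fin n) (Fin n) ℝ)
    {v : Fin n → ℝ} (hv : v ≠ 0) : (NormedSpace.exp A).mulVec v ≠ 0 := by
  intro h
  apply hv
  have h2 : (NormedSpace.exp (-A)).mulVec ((NormedSpace.exp A).mulVec v) = 0 := by
    rw [h, Matrix.mulVec_zero]
  rwa [Matrix.mulVec_mulVec, ← Matrix.exp_add_of_commute (-A) A ((Commute.refl A).neg_left),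
    neg_add_cancel, NormedSpace.exp_zero, Matrix.one_mulVec] at h2

/-- estimates relating the weighted Euclidean norm and the canonical
homogeneous norm `‖x‖_d = e^s` where `‖exp (-s G) x‖_P = 1`. -/
theorem stmt_3 {n : ℕ} (P G : Matrix (Fin n) (Fin n) ℝ) (α β : ℝ)
    (hβ : 0 < β) (hβα : β ≤ α)
    (hPsym : P.IsSymm)
    (hPpd : ∀ x : Fin n → ℝ, x ≠ 0 → 0 < x ⬝ᵥ P.mulVec x)
    (hlow : ∀ x : Fin n → ℝ, 0 ≤ x ⬝ᵥ ((P * G + Gᵀ * P) - (2 * β) • P).mulVec x)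
    (hup : ∀ x : Fin n → ℝ, 0 ≤ x ⬝ᵥ ((2 * α) • P - (P * G + Gᵀ * P)).mulVec x)
    (x : Fin n → ℝ) (hx : x ≠ 0) (s : ℝ)
    (hs : wnorm P ((NormedSpace.exp ((-s) • G)).mulVec x) = 1) :
    (s ≤ 0 →
      (Real.exp s) ^ α ≤ wnorm P x ∧ wnorm P x ≤ (Real.exp s) ^ β) ∧
    (0 ≤ s →
      (Real.exp s) ^ β ≤ wnorm P x ∧ wnorm P x ≤ (Real.exp s) ^ α) := by
  set y : Fin n → ℝ := (NormedSpace.exp ((-s) • G)).mulVec x with hy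
  have hyne : y ≠ 0 := exp_mulVec_ne_zero _ hx
  set z : ℝ → Fin n → ℝ := fun t => (NormedSpace.exp (t • G)).mulVec y with hz
  have hzne : ∀ t, z t ≠ 0 := fun t => exp_mulVec_ne_zero _ hyne
  set f : ℝ → ℝ := fun t => z t ⬝ᵥ P.mulVec (z t) with hf
  have hfpos : ∀ t, 0 < f t := fun t => hPpd _ (hzne t)
  -- derivative of components of z
  have hzder : ∀ t i, HasDerivAt (fun u => z u i) ((G.mulVec (z t)) i) t := by
    intro t i
    have : ∀ u, z u i = ∑ j, NormedSpace.exp (u • G) i j * y j := by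
      intro u; simp [hz, Matrix.mulVec, dotProduct]
    simp only [this]
    have hG : (G.mulVec (z t)) i = ∑ j, (G * NormedSpace.exp (t • G)) i j * y j := by
      show (G *ᵥ (NormedSpace.exp (t • G) *ᵥ y)) i = _
      simp only [Matrix.mulVec, dotProduct, Matrix.mul_apply, Finset.sum_mul,
        Finset.mul_sum, mul_assoc]
      rw [Finset.sum_comm]
    rw [hG]
    exact HasDerivAt.fun_sum fun j _ => (exp_entry_hasDerivAt G t i j).mul_const (y j)
  -- derivative of f
  have hfder : ∀ t, HasDerivAt f
      (G.mulVec (z t) ⬝ᵥ P.mulVec (z t) + z t ⬝ᵥ P.mulVec (G.mulVec (z t))) t := by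
    intro t
    have h1 : ∀ u, f u = ∑ i, z u i * ∑ j, P i j * z u j := by
      intro u; simp [hf, Matrix.mulVec, dotProduct]
    have h2 : G.mulVec (z t) ⬝ᵥ P.mulVec (z t) + z t ⬝ᵥ P.mulVec (G.mulVec (z t)) =
        ∑ i, ((G.mulVec (z t)) i * ∑ j, P i j * z t j +
          z t i * ∑ j, P i j * (G.mulVec (z t)) j) := by
      simp [Matrix.mulVec, dotProduct, Finset.sum_add_distrib]
    have hfun : f = fun u => ∑ i, z u i * ∑ j, P i j * z u j := funext h1
    rw [hfun, h2]
    refine HasDerivAt.fun_sum fun i _ => ?_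
    exact (hzder t i).mul (HasDerivAt.fun_sum fun j _ => (hzder t j).const_mul (P i j))
  -- rewrite the derivative as a quadratic form
  have hquad : ∀ t, G.mulVec (z t) ⬝ᵥ P.mulVec (z t) + z t ⬝ᵥ P.mulVec (G.mulVec (z t)) =
      z t ⬝ᵥ ((P * G + Gᵀ * P)).mulVec (z t) := by
    intro t
    rw [Matrix.add_mulVec, dotProduct_add, ← Matrix.mulVec_mulVec,
      ← Matrix.mulVec_mulVec, Matrix.dotProduct_mulVec (z t) Gᵀ,
      Matrix.vecMul_transpose]
    ring
  -- bounds on the derivative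
  have hlow' : ∀ t, 2 * β * f t ≤ z t ⬝ᵥ (P * G + Gᵀ * P).mulVec (z t) := by
    intro t
    have := hlow (z t)
    rw [Matrix.sub_mulVec, dotProduct_sub, sub_nonneg, Matrix.smul_mulVec,
      dotProduct_smul] at this
    simpa [smul_eq_mul, hf] using this
  have hup' : ∀ t, z t ⬝ᵥ (P * G + Gᵀ * P).mulVec (z t) ≤ 2 * α * f t := by
    intro t
    have := hup (z t)
    rw [Matrix.sub_mulVec, dotProduct_sub, sub_nonneg, Matrix.smul_mulVec,
      dotProduct_smul] at this
    simpa [smul_eq_mul, hf] using this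
  -- log of f
  set g : ℝ → ℝ := fun t => Real.log (f t) with hg
  have hgder : ∀ t, HasDerivAt g ((z t ⬝ᵥ (P * G + Gᵀ * P).mulVec (z t)) / f t) t := by
    intro t
    have h := (Real.hasDerivAt_log (hfpos t).ne').comp t ((hquad t) ▸ hfder t)
    rw [div_eq_inv_mul]; exact h
  -- monotone auxiliary functions
  have hmono1 : Monotone (fun t => g t - 2 * β * t) := by
    refine monotone_of_hasDerivAt_nonneg
      (f' := fun t => (z t ⬝ᵥ (P * G + Gᵀ * P).mulVec (z t)) / f t - 2 * β)
      (fun t => by have h := (hgder t).sub ((hasDerivAt_id t).const_mul (2 * β)); rw [mul_one] at h; exact h) ?_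
    intro t
    have h := hlow' t
    have hft := hfpos t
    have : 2 * β ≤ (z t ⬝ᵥ (P * G + Gᵀ * P).mulVec (z t)) / f t := by
      rw [le_div_iff₀ hft]; linarith
    simpa [Pi.zero_apply, sub_nonneg] using this
  have hmono2 : Monotone (fun t => 2 * α * t - g t) := by
    refine monotone_of_hasDerivAt_nonneg
      (f' := fun t => 2 * α - (z t ⬝ᵥ (P * G + Gᵀ * P).mulVec (z t)) / f t)
      (fun t => by have h := ((hasDerivAt_id t).const_mul (2 * α)).sub (hgder t); rw [mul_one] at h; exact h) ?_
    intro t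
    have h := hup' t
    have hft := hfpos t
    have : (z t ⬝ᵥ (P * G + Gᵀ * P).mulVec (z t)) / f t ≤ 2 * α := by
      rw [div_le_iff₀ hft]; linarith
    simpa [Pi.zero_apply, sub_nonneg] using this
  -- endpoint values
  have hz0 : z 0 = y := by
    show NormedSpace.exp ((0:ℝ) • G) *ᵥ y = y
    rw [zero_smul, NormedSpace.exp_zero, Matrix.one_mulVec]
  have hf0 : f 0 = 1 := by
    have h1 : Real.sqrt (f 0) = 1 := by
      show Real.sqrt (z 0 ⬝ᵥ P *ᵥ z 0) = 1
      rw [hz0]; exact hs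
    have := congrArg (fun r => r ^ 2) h1
    simpa [Real.sq_sqrt (hfpos 0).le] using this
  have hg0 : g 0 = 0 := by rw [hg]; simp [hf0]
  have hzs : z s = x := by
    show NormedSpace.exp (s • G) *ᵥ y = x
    rw [hy, Matrix.mulVec_mulVec, ← Matrix.exp_add_of_commute (s • G) ((-s) • G)
      (Commute.refl G |>.smul_left s |>.smul_right (-s)), neg_smul,
      add_neg_cancel, NormedSpace.exp_zero, Matrix.one_mulVec]
  have hwx : wnorm P x = Real.exp (g s / 2) := by
    have hfs : f s = Real.exp (g s) := (Real.exp_log (hfpos s)).symm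
    have : wnorm P x = Real.sqrt (f s) := by
      rw [show f s = x ⬝ᵥ P *ᵥ x from hzs ▸ rfl]; rfl
    rw [this, hfs, show Real.exp (g s) = Real.exp (g s / 2) ^ 2 by
      rw [← Real.exp_nat_mul]; ring_nf]
    exact Real.sqrt_sq (Real.exp_pos _).le
  have hrpow : ∀ c : ℝ, (Real.exp s) ^ c = Real.exp (s * c) := by
    intro c
    rw [Real.rpow_def_of_pos (Real.exp_pos s), Real.log_exp]
  constructor
  · intro hsneg
    have h1 : g s - 2 * β * s ≤ g 0 - 2 * β * 0 := hmono1 hsneg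
    have h2 : 2 * α * s - g s ≤ 2 * α * 0 - g 0 := hmono2 hsneg
    rw [hg0] at h1 h2
    constructor
    · rw [hrpow α, hwx, Real.exp_le_exp]; linarith
    · rw [hrpow β, hwx, Real.exp_le_exp]; linarith
  · intro hspos
    have h1 : g 0 - 2 * β * 0 ≤ g s - 2 * β * s := hmono1 hspos
    have h2 : 2 * α * 0 - g 0 ≤ 2 * α * s - g s := hmono2 hspos
    rw [hg0] at h1 h2
    constructor
    · rw [hrpow β, hwx, Real.exp_le_exp]; linarith
    · rw [hrpow α, hwx, Real.exp_le_exp]; linarith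
end

section
/- Let ν ∈ ℝ, ρ > 0, A₀ ∈ ℝ^{n×n}, C ∈ ℝ^{k×n}, L ∈ ℝ^{n×k} and G ∈ ℝ^{n×n} satisfy A₀·G = (G + ν·I)·A₀ and C·G = C. Define, for ε ∈ ℝⁿ and ξ ∈ ℝ with ξ ≠ 0, the error vector field g(ε,ξ) = (A₀·ε + |ξ|^{ν−1}·exp(ln|ξ|·G)·L·C·ε, −ρ·|ξ|^{1+ν}·sign(ξ)). Then g is homogeneous of degree ν with respect to the dilation (ε,ξ) ↦ (exp(sG)·ε, e^{s}·ξ): for all s ∈ ℝ, all ε ∈ ℝⁿ and all ξ ≠ 0, g(exp(sG)·ε, e^{s}·ξ) = (e^{νs}·exp(sG)·g₁(ε,ξ), e^{νs}·e^{s}·g₂(ε,ξ)), where g = (g₁,g₂). -/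
open Matrix NormedSpace Nat

section aux
variable {n k : ℕ}

lemma aux_mul_exp (A₀ B G : Matrix (Fin n) (Fin n) ℝ)
    (h : A₀ * G = B * A₀) (s : ℝ) :
    A₀ * exp (s • G) = exp (s • B) * A₀ := by
  letI : SeminormedRing (Matrix (Fin n) (Fin n) ℝ) := Matrix.linftyOpSemiNormedRing
  letI : NormedRing (Matrix (Fin n) (Fin n) ℝ) := Matrix.linftyOpNormedRing
  letI : NormedAlgebra ℝ (Matrix (Fin n) (Fin n) ℝ) := Matrix.linftyOpNormedAlgebra
  have hpow : ∀ m : ℕ, A₀ * (s • G) ^ m = (s • B) ^ m * A₀ := by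
    intro m
    induction m with
    | zero => simp
    | succ m ih =>
      rw [pow_succ, ← mul_assoc, ih, mul_assoc, Matrix.mul_smul, h, ← Matrix.smul_mul,
        ← mul_assoc, ← pow_succ]
  have hsum : Summable (fun m : ℕ => ((m ! : ℝ))⁻¹ • (s • G) ^ m) :=
    expSeries_summable' (𝕂 := ℝ) (s • G)
  let f : Matrix (Fin n) (Fin n) ℝ →ₗ[ℝ] Matrix (Fin n) (Fin n) ℝ :=
    { toFun := fun M => A₀ * M
      map_add' := fun x y => Matrix.mul_add _ x y
      map_smul' := fun c x => (Matrix.mul_smul _ c x) }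
  let g : Matrix (Fin n) (Fin n) ℝ →ₗ[ℝ] Matrix (Fin n) (Fin n) ℝ :=
    { toFun := fun M => M * A₀
      map_add' := fun x y => Matrix.add_mul x y _
      map_smul' := fun c x => (Matrix.smul_mul c x _) }
  have hf : Continuous f := f.continuous_of_finiteDimensional
  have hg : Continuous g := g.continuous_of_finiteDimensional
  have hsum' : Summable (fun m : ℕ => ((m ! : ℝ))⁻¹ • (s • B) ^ m) :=
    expSeries_summable' (𝕂 := ℝ) (s • B)
  have h1 : A₀ * exp (s • G) = ∑' m : ℕ, ((m ! : ℝ))⁻¹ • ((s • B) ^ m * A₀) := by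
    have htk := (hsum.hasSum.map f.toAddMonoidHom hf).tsum_eq
    simp only [LinearMap.toAddMonoidHom_coe, Function.comp] at htk
    calc A₀ * exp (s • G) = f (∑' m : ℕ, ((m ! : ℝ))⁻¹ • (s • G) ^ m) := by
          rw [exp_eq_tsum (𝕂 := ℝ)]; rfl
      _ = ∑' m : ℕ, f (((m ! : ℝ))⁻¹ • (s • G) ^ m) := htk.symm
      _ = ∑' m : ℕ, ((m ! : ℝ))⁻¹ • ((s • B) ^ m * A₀) := by
          refine tsum_congr fun m => ?_
          show A₀ * (((m ! : ℝ))⁻¹ • (s • G) ^ m) = _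
          rw [Matrix.mul_smul, hpow]
  have h2 : exp (s • B) * A₀ = ∑' m : ℕ, ((m ! : ℝ))⁻¹ • ((s • B) ^ m * A₀) := by
    have htk := (hsum'.hasSum.map g.toAddMonoidHom hg).tsum_eq
    simp only [LinearMap.toAddMonoidHom_coe, Function.comp] at htk
    calc exp (s • B) * A₀ = g (∑' m : ℕ, ((m ! : ℝ))⁻¹ • (s • B) ^ m) := by
          rw [exp_eq_tsum (𝕂 := ℝ)]; rfl
      _ = ∑' m : ℕ, g (((m ! : ℝ))⁻¹ • (s • B) ^ m) := htk.symm
      _ = ∑' m : ℕ, ((m ! : ℝ))⁻¹ • ((s • B) ^ m * A₀) := by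
          refine tsum_congr fun m => ?_
          show (((m ! : ℝ))⁻¹ • (s • B) ^ m) * A₀ = _
          rw [Matrix.smul_mul]
  rw [h1, h2]

lemma aux_C_exp (C : Matrix (Fin k) (Fin n) ℝ) (G : Matrix (Fin n) (Fin n) ℝ)
    (hC : C * G = C) (s : ℝ) :
    C * exp (s • G) = Real.exp s • C := by
  letI : SeminormedRing (Matrix (Fin n) (Fin n) ℝ) := Matrix.linftyOpSemiNormedRing
  letI : NormedRing (Matrix (Fin n) (Fin n) ℝ) := Matrix.linftyOpNormedRing
  letI : NormedAlgebra ℝ (Matrix (Fin n) (Fin n) ℝ) := Matrix.linftyOpNormedAlgebra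
  have hpow : ∀ m : ℕ, C * G ^ m = C := by
    intro m
    induction m with
    | zero => simp
    | succ m ih => rw [pow_succ, ← Matrix.mul_assoc, ih, hC]
  have hsum : Summable (fun m : ℕ => ((m ! : ℝ))⁻¹ • (s • G) ^ m) :=
    expSeries_summable' (𝕂 := ℝ) (s • G)
  let f : Matrix (Fin n) (Fin n) ℝ →ₗ[ℝ] Matrix (Fin k) (Fin n) ℝ :=
    { toFun := fun M => C * M
      map_add' := fun x y => Matrix.mul_add _ x y
      map_smul' := fun c x => (Matrix.mul_smul _ c x) }
  have hf : Continuous f := f.continuous_of_finiteDimensional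
  have htk := (hsum.hasSum.map f.toAddMonoidHom hf).tsum_eq
  simp only [LinearMap.toAddMonoidHom_coe, Function.comp] at htk
  have hterm : ∀ m : ℕ, f (((m ! : ℝ))⁻¹ • (s • G) ^ m) = (s ^ m / m !) • C := by
    intro m
    show C * (((m ! : ℝ))⁻¹ • (s • G) ^ m) = _
    rw [smul_pow, Matrix.mul_smul, Matrix.mul_smul, hpow, smul_smul]
    congr 1
    field_simp
  calc C * exp (s • G) = f (∑' m : ℕ, ((m ! : ℝ))⁻¹ • (s • G) ^ m) := by
        rw [exp_eq_tsum (𝕂 := ℝ)]; rfl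
    _ = ∑' m : ℕ, f (((m ! : ℝ))⁻¹ • (s • G) ^ m) := htk.symm
    _ = ∑' m : ℕ, (s ^ m / m !) • C := tsum_congr hterm
    _ = (∑' m : ℕ, (s ^ m / m !)) • C := by
        rw [(Real.summable_pow_div_factorial s).tsum_smul_const]
    _ = Real.exp s • C := by rw [Real.exp_eq_exp_ℝ, exp_eq_tsum_div]

lemma aux_exp_smul_one (G : Matrix (Fin n) (Fin n) ℝ) (s c : ℝ) :
    exp (s • G + c • (1 : Matrix (Fin n) (Fin n) ℝ)) = Real.exp c • exp (s • G) := by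
  letI : SeminormedRing (Matrix (Fin n) (Fin n) ℝ) := Matrix.linftyOpSemiNormedRing
  letI : NormedRing (Matrix (Fin n) (Fin n) ℝ) := Matrix.linftyOpNormedRing
  letI : NormedAlgebra ℝ (Matrix (Fin n) (Fin n) ℝ) := Matrix.linftyOpNormedAlgebra
  have hcomm : Commute (s • G) (c • (1 : Matrix (Fin n) (Fin n) ℝ)) :=
    ((Commute.one_right (s • G)).smul_right c)
  rw [Matrix.exp_add_of_commute _ _ hcomm]
  have h1 : (c • (1 : Matrix (Fin n) (Fin n) ℝ)) = algebraMap ℝ _ c :=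
    (Algebra.algebraMap_eq_smul_one c).symm
  rw [h1]; erw [← algebraMap_exp_comm]; rw [← Real.exp_eq_exp_ℝ, Algebra.algebraMap_eq_smul_one,
    Matrix.mul_smul, mul_one]

end aux

open Matrix

/-- the error vector field of the dynamic homogeneous observer is
homogeneous of degree `ν` w.r.t. the dilation `(ε, ξ) ↦ (exp(sG) ε, e^s ξ)`. -/
theorem stmt_8 {n k : ℕ} (ν ρ : ℝ) (hρ : 0 < ρ)
    (A₀ : Matrix (Fin n) (Fin n) ℝ) (C : Matrix (Fin k) (Fin n) ℝ)
    (L : Matrix (Fin n) (Fin k) ℝ) (G : Matrix (Fin n) (Fin n) ℝ)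
    (hA₀ : A₀ * G = (G + ν • (1 : Matrix (Fin n) (Fin n) ℝ)) * A₀)
    (hC : C * G = C)
    -- the two components of the error vector field g(ε, ξ)
    (g₁ : (Fin n → ℝ) → ℝ → (Fin n → ℝ)) (g₂ : (Fin n → ℝ) → ℝ → ℝ)
    (hg₁ : ∀ (ε : Fin n → ℝ) (ξ : ℝ), ξ ≠ 0 →
      g₁ ε ξ = A₀.mulVec ε +
        |ξ| ^ (ν - 1) • (NormedSpace.exp (Real.log |ξ| • G)).mulVec (L.mulVec (C.mulVec ε)))
    (hg₂ : ∀ (ε : Fin n → ℝ) (ξ : ℝ), ξ ≠ 0 →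
      g₂ ε ξ = -ρ * |ξ| ^ (1 + ν) * Real.sign ξ) :
    ∀ (s : ℝ) (ε : Fin n → ℝ) (ξ : ℝ), ξ ≠ 0 →
      g₁ ((NormedSpace.exp (s • G)).mulVec ε) (Real.exp s * ξ) =
        Real.exp (ν * s) • (NormedSpace.exp (s • G)).mulVec (g₁ ε ξ) ∧
      g₂ ((NormedSpace.exp (s • G)).mulVec ε) (Real.exp s * ξ) =
        Real.exp (ν * s) * Real.exp s * g₂ ε ξ := by
  intro s ε ξ hξ
  have hes : (0 : ℝ) < Real.exp s := Real.exp_pos s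
  have hξ' : Real.exp s * ξ ≠ 0 := mul_ne_zero (ne_of_gt hes) hξ
  have habs : |Real.exp s * ξ| = Real.exp s * |ξ| := by
    rw [abs_mul, abs_of_pos hes]
  have hrpow : ∀ a : ℝ, |Real.exp s * ξ| ^ a = Real.exp (s * a) * |ξ| ^ a := by
    intro a
    rw [habs, Real.mul_rpow hes.le (abs_nonneg _), Real.rpow_def_of_pos hes, Real.log_exp]
  have hlog : Real.log |Real.exp s * ξ| = s + Real.log |ξ| := by
    rw [habs, Real.log_mul (ne_of_gt hes) (abs_ne_zero.mpr hξ), Real.log_exp]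
  have hsign : Real.sign (Real.exp s * ξ) = Real.sign ξ := by
    rcases lt_trichotomy ξ 0 with h | h | h
    · rw [Real.sign_of_neg h, Real.sign_of_neg (mul_neg_of_pos_of_neg hes h)]
    · exact absurd h hξ
    · rw [Real.sign_of_pos h, Real.sign_of_pos (mul_pos hes h)]
  -- key matrix identities
  have hA : A₀ * NormedSpace.exp (s • G) =
      Real.exp (ν * s) • (NormedSpace.exp (s • G) * A₀) := by
    rw [aux_mul_exp A₀ (G + ν • (1 : Matrix (Fin n) (Fin n) ℝ)) G hA₀ s]
    rw [smul_add, smul_smul, aux_exp_smul_one, Matrix.smul_mul, mul_comm s ν]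
  have hCE : C * NormedSpace.exp (s • G) = Real.exp s • C := aux_C_exp C G hC s
  have hsplit : NormedSpace.exp ((s + Real.log |ξ|) • G) =
      NormedSpace.exp (s • G) * NormedSpace.exp (Real.log |ξ| • G) := by
    rw [add_smul]
    exact Matrix.exp_add_of_commute _ _ (((Commute.refl G).smul_left s).smul_right _)
  have e1 : Real.exp (s * (ν - 1)) * Real.exp s = Real.exp (ν * s) := by
    rw [← Real.exp_add]; ring_nf
  constructor
  · rw [hg₁ _ _ hξ', hg₁ _ _ hξ, hlog, hrpow, hsplit]
    rw [Matrix.mulVec_mulVec ε C (NormedSpace.exp (s • G)), hCE,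
      Matrix.smul_mulVec, Matrix.mulVec_smul, Matrix.mulVec_smul,
      Matrix.mulVec_mulVec ε A₀ (NormedSpace.exp (s • G)), hA,
      Matrix.smul_mulVec]
    simp only [Matrix.mulVec_add, Matrix.mulVec_smul, Matrix.mulVec_mulVec, smul_add,
      smul_smul, Matrix.mul_assoc]
    match_scalars <;> rw [← e1] <;> ring
  · rw [hg₂ _ _ hξ', hg₂ _ _ hξ, hsign, hrpow]
    have e2 : Real.exp (s * (1 + ν)) = Real.exp (ν * s) * Real.exp s := by
      rw [← Real.exp_add]; ring_nf
    rw [e2]; ring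
end

section
/- Let ν ≠ 0, ρ > 0, and let A₀ ∈ ℝ^{n×n}, C ∈ ℝ^{k×n}, L ∈ ℝ^{n×k}, G ∈ ℝ^{n×n} satisfy A₀·G = (G + ν·I)·A₀ and C·G = C. Let I ⊆ ℝ be an interval, ξ : I → ℝ differentiable with ξ(t) > 0 and ξ'(t) = −ρ·ξ(t)^{1+ν} for all t ∈ I, and ε : I → ℝⁿ differentiable with ε'(t) = A₀·ε(t) + ξ(t)^{ν−1}·exp(ln ξ(t)·G)·L·C·ε(t) for all t ∈ I. Then the function ϵ(t) := exp(−ln ξ(t)·G)·ε(t) is differentiable on I and satisfies ϵ'(t) = ξ(t)^{ν}·(A₀ + L·C + ρ·G)·ϵ(t) for all t ∈ I. -/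
open Matrix NormedSpace

attribute [local instance] Matrix.linftyOpNormedRing Matrix.linftyOpNormedAlgebra

section helpers

variable {n : ℕ}

lemma pow_intertwine (A B G : Matrix (Fin n) (Fin n) ℝ)
    (h : B * A = A * G) : ∀ m : ℕ, B ^ m * A = A * G ^ m := by
  intro m
  induction m with
  | zero => simp
  | succ m ih =>
    rw [pow_succ, pow_succ, mul_assoc, h, ← mul_assoc, ih, mul_assoc]

lemma exp_intertwine (A B G : Matrix (Fin n) (Fin n) ℝ)
    (h : B * A = A * G) : exp B * A = A * exp G := by
  calc exp B * A = (∑' m : ℕ, ((m.factorial : ℝ))⁻¹ • B ^ m) * A := by rw [exp_eq_tsum ℝ]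
    _ = ∑' m : ℕ, (((m.factorial : ℝ))⁻¹ • B ^ m) * A :=
        ((expSeries_summable' (𝕂 := ℝ) B).tsum_mul_right A).symm
    _ = ∑' m : ℕ, A * (((m.factorial : ℝ))⁻¹ • G ^ m) := by
        refine tsum_congr fun m => ?_
        rw [smul_mul_assoc, pow_intertwine A B G h, mul_smul_comm]
    _ = A * ∑' m : ℕ, ((m.factorial : ℝ))⁻¹ • G ^ m :=
        (expSeries_summable' (𝕂 := ℝ) G).tsum_mul_left A
    _ = A * exp G := by rw [exp_eq_tsum ℝ]

lemma exp_smul_one (c : ℝ) :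
    exp (c • (1 : Matrix (Fin n) (Fin n) ℝ)) = Real.exp c • 1 := by
  have := algebraMap_exp_comm (𝕂 := ℝ) (𝔸 := Matrix (Fin n) (Fin n) ℝ) c
  rw [Algebra.algebraMap_eq_smul_one, Algebra.algebraMap_eq_smul_one] at this
  rw [Real.exp_eq_exp_ℝ]
  convert this.symm using 2 <;> rfl

end helpers

/-- under the homogeneity identities `A₀ G = (G + ν I) A₀`, `C G = C`,
the change of variable `ϵ(t) = exp(-ln ξ(t) · G) ε(t)` transforms the observer error
dynamics into `ϵ' = ξ^ν (A₀ + L C + ρ G) ϵ`. -/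
theorem stmt_10 {n k : ℕ} (ν ρ : ℝ) (hν : ν ≠ 0) (hρ : 0 < ρ)
    (A₀ : Matrix (Fin n) (Fin n) ℝ) (C : Matrix (Fin k) (Fin n) ℝ)
    (L : Matrix (Fin n) (Fin k) ℝ) (G : Matrix (Fin n) (Fin n) ℝ)
    (hA₀ : A₀ * G = (G + ν • (1 : Matrix (Fin n) (Fin n) ℝ)) * A₀)
    (hC : C * G = C)
    (I : Set ℝ) (hI : I.OrdConnected)
    (ξ : ℝ → ℝ) (ε : ℝ → (Fin n → ℝ))
    (hξpos : ∀ t ∈ I, 0 < ξ t)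
    (hξ : ∀ t ∈ I, HasDerivAt ξ (-ρ * (ξ t) ^ (1 + ν)) t)
    (hε : ∀ t ∈ I, HasDerivAt ε
      (A₀.mulVec (ε t) +
        (ξ t) ^ (ν - 1) •
          (NormedSpace.exp (Real.log (ξ t) • G)).mulVec (L.mulVec (C.mulVec (ε t)))) t) :
    ∀ t ∈ I,
      HasDerivAt (fun τ : ℝ => (NormedSpace.exp ((-Real.log (ξ τ)) • G)).mulVec (ε τ))
        ((ξ t) ^ ν •
          (A₀ + L * C + ρ • G).mulVec
            ((NormedSpace.exp ((-Real.log (ξ t)) • G)).mulVec (ε t))) t := by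
  intro t ht
  have hx : 0 < ξ t := hξpos t ht
  set x : ℝ := ξ t with hxdef
  set s : ℝ := Real.log (ξ t) with hsdef
  set M : Matrix (Fin n) (Fin n) ℝ := exp ((-s) • G) with hMdef
  set E : Matrix (Fin n) (Fin n) ℝ := exp (s • G) with hEdef
  -- derivative of τ ↦ -log (ξ τ)
  have hu : HasDerivAt (fun τ => -Real.log (ξ τ)) (ρ * x ^ ν) t := by
    have h1 : HasDerivAt (fun τ => Real.log (ξ τ)) (-ρ * x ^ (1 + ν) / x) t :=
      (hξ t ht).log hx.ne'
    have h2 := h1.neg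
    refine h2.congr_deriv (Eq.symm ?_)
    rw [Real.rpow_add hx, Real.rpow_one]
    field_simp
  -- derivative of the matrix exponential factor
  have hM : HasDerivAt (fun τ => exp ((-Real.log (ξ τ)) • G))
      ((ρ * x ^ ν) • (M * G)) t := by
    have := HasDerivAt.scomp (x := t) (h := fun τ => -Real.log (ξ τ)) (g₁ := fun u : ℝ => exp (u • G))
      (hasDerivAt_exp_smul_const (𝕂 := ℝ) G (-s)) hu
    exact this
  -- the bilinear pairing as a continuous linear map
  let Φ : Matrix (Fin n) (Fin n) ℝ →L[ℝ] ((Fin n → ℝ) →L[ℝ] (Fin n → ℝ)) :=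
    LinearMap.toContinuousLinearMap
      { toFun := fun A => LinearMap.toContinuousLinearMap A.mulVecLin
        map_add' := by
          intro A B
          ext v i
          simp [Matrix.add_mulVec]
        map_smul' := by
          intro c A
          ext v i
          simp [Matrix.smul_mulVec] }
  have hΦ : ∀ (A : Matrix (Fin n) (Fin n) ℝ) (v : Fin n → ℝ), Φ A v = A.mulVec v := by
    intro A v; rfl
  have hΦM : HasDerivAt (fun τ => Φ (exp ((-Real.log (ξ τ)) • G)))
      (Φ ((ρ * x ^ ν) • (M * G))) t := Φ.hasFDerivAt.comp_hasDerivAt t hM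
  have hmain := hΦM.clm_apply (hε t ht)
  have hfun : (fun τ => Φ (exp ((-Real.log (ξ τ)) • G)) (ε τ))
      = fun τ : ℝ => (exp ((-Real.log (ξ τ)) • G)).mulVec (ε τ) := by
    funext τ; exact hΦ _ _
  rw [hfun] at hmain
  refine hmain.congr_deriv (Eq.symm ?_)
  rw [hΦ, hΦ]
  -- now a pure matrix algebra identity
  -- key facts
  have commMG : M * G = G * M := (((Commute.refl G).smul_left (-s)).exp_left).eq
  have fact1 : M * A₀ = x ^ ν • (A₀ * M) := by
    have hB : ((-s) • (G + ν • (1 : Matrix (Fin n) (Fin n) ℝ))) * A₀ = A₀ * ((-s) • G) := by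
      rw [smul_mul_assoc, ← hA₀, mul_smul_comm]
    have h := exp_intertwine A₀ _ _ hB
    have hsplit : exp ((-s) • (G + ν • (1 : Matrix (Fin n) (Fin n) ℝ)))
        = Real.exp (-s * ν) • M := by
      have hcomm : Commute ((-s) • G) ((-s * ν) • (1 : Matrix (Fin n) (Fin n) ℝ)) :=
        ((Commute.one_right _).smul_left _).smul_right _
      have : (-s) • (G + ν • (1 : Matrix (Fin n) (Fin n) ℝ))
          = (-s) • G + (-s * ν) • (1 : Matrix (Fin n) (Fin n) ℝ) := by
        rw [smul_add, smul_smul]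
      rw [this]; erw [exp_add_of_commute hcomm, exp_smul_one]; rw [mul_smul_comm, mul_one]; rfl
    rw [hsplit, smul_mul_assoc] at h
    have hxν : Real.exp (s * ν) = x ^ ν := by
      rw [Real.rpow_def_of_pos hx]
    have := congrArg (fun Y => Real.exp (s * ν) • Y) h
    simp only [smul_smul, ← Real.exp_add] at this
    rw [show s * ν + -s * ν = 0 by ring, Real.exp_zero, one_smul] at this
    rw [this, hxν]
  have fact2 : (L * C) * M = x⁻¹ • (L * C) := by
    have hPG : (L * C) * G = L * C := by rw [Matrix.mul_assoc, hC]
    have hB : ((-s) • (1 : Matrix (Fin n) (Fin n) ℝ)) * (L * C) = (L * C) * ((-s) • G) := by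
      rw [smul_mul_assoc, one_mul, mul_smul_comm, hPG]
    have h := exp_intertwine (L * C) _ _ hB
    rw [exp_smul_one] at h
    rw [← h, smul_mul_assoc, one_mul, Real.exp_neg, Real.exp_log hx]
  have fact3 : M * E = 1 := by
    rw [hMdef, hEdef]; erw [← exp_add_of_commute (((Commute.refl G).smul_left (-s)).smul_right s)]
    rw [← add_smul, neg_add_cancel, zero_smul, exp_zero]
  have hx1 : x ^ (ν - 1) = x ^ ν * x⁻¹ := by
    rw [Real.rpow_sub hx, Real.rpow_one, div_eq_mul_inv]
  -- finish
  simp only [← hsdef, ← hxdef]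
  rw [Matrix.mulVec_add, Matrix.mulVec_smul]
  simp only [Matrix.mulVec_mulVec]
  rw [← hMdef, ← hEdef, ← Matrix.mul_assoc M E (L * C), fact3, Matrix.one_mul, fact1,
    Matrix.add_mul, Matrix.add_mul, fact2, Matrix.smul_mul, commMG, hx1]
  simp only [Matrix.add_mulVec, Matrix.smul_mulVec, smul_add, smul_smul]
  module
end

section
/- Let A₀ ∈ ℝ^{n×n}, C ∈ ℝ^{k×n}, G ∈ ℝ^{n×n} and ρ > 0. Suppose there exist a symmetric positive definite P ∈ ℝ^{n×n} and Y ∈ ℝ^{n×k} such that P·A₀ + A₀ᵀ·P + Y·C + Cᵀ·Yᵀ + 2ρ·(P·G + Gᵀ·P) ⪯ 0 and P·G + Gᵀ·P ≻ 0. Define the block matrices Ḡ = [[I_k, 0],[0, G]], Ā₀ = [[0, C],[0, A₀]] (both of size (k+n)×(k+n)) and C̄ = [I_k, 0] ∈ ℝ^{k×(k+n)}. Then there exist a symmetric positive definite P̄ ∈ ℝ^{(k+n)×(k+n)} and Ȳ ∈ ℝ^{(k+n)×k} such that P̄·Ā₀ + Ā₀ᵀ·P̄ + Ȳ·C̄ +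 C̄ᵀ·Ȳᵀ + ρ·(P̄·Ḡ + Ḡᵀ·P̄) ⪯ 0 and P̄·Ḡ + Ḡᵀ·P̄ ≻ 0. -/
open Matrix


lemma quad_upper {n : ℕ} (M : Matrix (Fin n) (Fin n) ℝ) :
    ∃ K, 0 ≤ K ∧ ∀ x : Fin n → ℝ, x ⬝ᵥ M.mulVec x ≤ K * (x ⬝ᵥ x) := by
  refine ⟨∑ i, ∑ j, |M i j|, by positivity, fun x => ?_⟩
  have h1 : x ⬝ᵥ M.mulVec x = ∑ i, ∑ j, x i * M i j * x j := by
    simp [dotProduct, Matrix.mulVec, Finset.mul_sum, mul_assoc]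
  rw [h1, Finset.sum_mul]
  refine Finset.sum_le_sum fun i _ => ?_
  rw [Finset.sum_mul]
  refine Finset.sum_le_sum fun j _ => ?_
  have hsq : ∀ t : Fin n, (x t) ^ 2 ≤ x ⬝ᵥ x := fun t => by
    simpa [dotProduct, sq] using Finset.single_le_sum (f := fun s => x s * x s)
      (fun s _ => mul_self_nonneg (x s)) (Finset.mem_univ t)
  have habs : |x i * x j| ≤ x ⬝ᵥ x := by
    rw [abs_mul]
    nlinarith [hsq i, hsq j, sq_abs (x i), sq_abs (x j), abs_nonneg (x i), abs_nonneg (x j),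
      sq_nonneg (|x i| - |x j|)]
  calc x i * M i j * x j ≤ |x i * M i j * x j| := le_abs_self _
    _ = |M i j| * |x i * x j| := by rw [abs_mul, abs_mul, abs_mul]; ring
    _ ≤ |M i j| * (x ⬝ᵥ x) := mul_le_mul_of_nonneg_left habs (abs_nonneg _)

lemma quad_lower {n : ℕ} (P : Matrix (Fin n) (Fin n) ℝ)
    (hP : ∀ x : Fin n → ℝ, x ≠ 0 → 0 < x ⬝ᵥ P.mulVec x) :
    ∃ c, 0 < c ∧ ∀ x : Fin n → ℝ, c * (x ⬝ᵥ x) ≤ x ⬝ᵥ P.mulVec x := by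
  rcases Nat.eq_zero_or_pos n with h0 | hn
  · subst h0
    exact ⟨1, one_pos, fun x => by simp [dotProduct]⟩
  · have hcont : Continuous (fun x : Fin n → ℝ => x ⬝ᵥ P.mulVec x) := by
      have : (fun x : Fin n → ℝ => x ⬝ᵥ P.mulVec x)
          = fun x => ∑ i, ∑ j, x i * (P i j * x j) := by
        funext x
        simp [dotProduct, Matrix.mulVec, Finset.mul_sum]
      rw [this]
      exact continuous_finset_sum _ fun i _ => continuous_finset_sum _ fun j _ =>
        (continuous_apply i).mul (continuous_const.mul (continuous_apply j))
    haveI : Nonempty (Fin n) := ⟨⟨0, hn⟩⟩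
    have hne : (Metric.sphere (0 : Fin n → ℝ) 1).Nonempty :=
      NormedSpace.sphere_nonempty.2 zero_le_one
    obtain ⟨z, hz, hmin⟩ := (isCompact_sphere (0 : Fin n → ℝ) 1).exists_isMinOn hne
      hcont.continuousOn
    have hz1 : ‖z‖ = 1 := by simpa using mem_sphere_iff_norm.mp hz
    have hz0 : z ≠ 0 := fun h => by simp [h] at hz1
    set m := z ⬝ᵥ P.mulVec z with hm
    have hm0 : 0 < m := hP z hz0
    refine ⟨m / n, by positivity, fun x => ?_⟩
    rcases eq_or_ne x 0 with rfl | hx0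
    · simp
    · have hnx : (0:ℝ) < ‖x‖ := norm_pos_iff.mpr hx0
      set y : Fin n → ℝ := ‖x‖⁻¹ • x with hy
      have hymem : y ∈ Metric.sphere (0 : Fin n → ℝ) 1 := by
        simp [hy, norm_smul, abs_of_pos (inv_pos.mpr hnx), inv_mul_cancel₀ hnx.ne']
      have hyval : y ⬝ᵥ P.mulVec y = (‖x‖⁻¹)^2 * (x ⬝ᵥ P.mulVec x) := by
        simp [hy, Matrix.mulVec_smul, smul_dotProduct, dotProduct_smul, smul_eq_mul, sq]
        ring
      have hge : m ≤ y ⬝ᵥ P.mulVec y := hmin hymem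
      have hxb : x ⬝ᵥ x ≤ n * ‖x‖^2 := by
        have : ∀ i, x i * x i ≤ ‖x‖^2 := fun i => by
          have := norm_le_pi_norm x i
          have h2 : |x i| ≤ ‖x‖ := by simpa using this
          nlinarith [abs_nonneg (x i), sq_abs (x i)]
        calc x ⬝ᵥ x = ∑ i, x i * x i := rfl
          _ ≤ ∑ _i : Fin n, ‖x‖^2 := Finset.sum_le_sum fun i _ => this i
          _ = n * ‖x‖^2 := by simp [mul_comm]
      have hkey : m * ‖x‖^2 ≤ x ⬝ᵥ P.mulVec x := by
        have h2 : m ≤ (‖x‖⁻¹)^2 * (x ⬝ᵥ P.mulVec x) := hyval ▸ hge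
        have h3 : (‖x‖^2) * m ≤ (‖x‖^2) * ((‖x‖⁻¹)^2 * (x ⬝ᵥ P.mulVec x)) :=
          mul_le_mul_of_nonneg_left h2 (by positivity)
        calc m * ‖x‖^2 = (‖x‖^2) * m := by ring
          _ ≤ (‖x‖^2) * ((‖x‖⁻¹)^2 * (x ⬝ᵥ P.mulVec x)) := h3
          _ = x ⬝ᵥ P.mulVec x := by
              field_simp
      have hn' : (0:ℝ) < n := by exact_mod_cast hn
      calc m / n * (x ⬝ᵥ x) ≤ m / n * (n * ‖x‖^2) := by
            apply mul_le_mul_of_nonneg_left hxb (by positivity)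
        _ = m * ‖x‖^2 := by field_simp
        _ ≤ x ⬝ᵥ P.mulVec x := hkey

lemma two_dot_ge {k : ℕ} (u w : Fin k → ℝ) {t : ℝ} (ht : 0 < t) :
    -(t * (u ⬝ᵥ u) + t⁻¹ * (w ⬝ᵥ w)) ≤ 2 * (u ⬝ᵥ w) := by
  have h0 : (0:ℝ) ≤ (t • u + w) ⬝ᵥ (t • u + w) :=
    Finset.sum_nonneg fun i _ => mul_self_nonneg _
  have hexp : (t • u + w) ⬝ᵥ (t • u + w)
      = t^2 * (u ⬝ᵥ u) + 2 * t * (u ⬝ᵥ w) + w ⬝ᵥ w := by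
    simp [add_dotProduct, dotProduct_add, smul_dotProduct, dotProduct_smul, smul_eq_mul,
      dotProduct_comm w u]
    ring
  rw [hexp] at h0
  have h1 : -(t^2 * (u ⬝ᵥ u) + w ⬝ᵥ w) ≤ 2 * t * (u ⬝ᵥ w) := by linarith
  have h2 : -(t * (u ⬝ᵥ u) + t⁻¹ * (w ⬝ᵥ w)) * t = -(t^2 * (u ⬝ᵥ u) + w ⬝ᵥ w) := by
    field_simp
  have h3 : -(t * (u ⬝ᵥ u) + t⁻¹ * (w ⬝ᵥ w)) * t ≤ (2 * (u ⬝ᵥ w)) * t := by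
    rw [h2]
    calc -(t^2 * (u ⬝ᵥ u) + w ⬝ᵥ w) ≤ 2 * t * (u ⬝ᵥ w) := h1
      _ = (2 * (u ⬝ᵥ w)) * t := by ring
  exact le_of_mul_le_mul_right h3 ht

lemma key {k n : ℕ} (B : Matrix (Fin k) (Fin n) ℝ) (S : Matrix (Fin n) (Fin n) ℝ)
    (hS : ∀ v : Fin n → ℝ, v ≠ 0 → 0 < v ⬝ᵥ S.mulVec v) :
    ∃ α, 0 < α ∧ ∀ β, α ≤ β → ∀ (u : Fin k → ℝ) (v : Fin n → ℝ), ¬(u = 0 ∧ v = 0) →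
      0 < β * (u ⬝ᵥ u) + 2 * (u ⬝ᵥ B.mulVec v) + v ⬝ᵥ S.mulVec v := by
  obtain ⟨c, hc, hcle⟩ := quad_lower S hS
  obtain ⟨K, hK, hKle⟩ := quad_upper (Bᵀ * B)
  set t := 2 * (K + 1) / c with htdef
  have ht : 0 < t := by positivity
  refine ⟨t + 1, by positivity, fun β hβ u v huv => ?_⟩
  have hw : (B.mulVec v) ⬝ᵥ (B.mulVec v) = v ⬝ᵥ (Bᵀ * B).mulVec v := by
    rw [← Matrix.mulVec_mulVec, Matrix.dotProduct_mulVec v, Matrix.vecMul_transpose]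
  have hw2 : (B.mulVec v) ⬝ᵥ (B.mulVec v) ≤ K * (v ⬝ᵥ v) := hw ▸ hKle v
  have hcs := two_dot_ge u (B.mulVec v) ht
  have hvv : 0 ≤ v ⬝ᵥ v := Finset.sum_nonneg fun i _ => mul_self_nonneg _
  have huu : 0 ≤ u ⬝ᵥ u := Finset.sum_nonneg fun i _ => mul_self_nonneg _
  have htinv : t⁻¹ * ((B.mulVec v) ⬝ᵥ (B.mulVec v)) ≤ (c/2) * (v ⬝ᵥ v) := by
    have h1 : t⁻¹ * ((B.mulVec v) ⬝ᵥ (B.mulVec v)) ≤ t⁻¹ * (K * (v ⬝ᵥ v)) :=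
      mul_le_mul_of_nonneg_left hw2 (by positivity)
    have h2 : t⁻¹ * K ≤ c / 2 := by
      rw [htdef, inv_div, div_mul_eq_mul_div, div_le_div_iff₀ (by positivity) (by norm_num)]
      nlinarith [hc.le, hK]
    nlinarith
  have hSv : c * (v ⬝ᵥ v) ≤ v ⬝ᵥ S.mulVec v := hcle v
  rcases Classical.em (u = 0) with hu | hu
  · have hv : v ≠ 0 := fun h => huv ⟨hu, h⟩
    subst hu
    simpa using hS v hv
  · have hupos : 0 < u ⬝ᵥ u := by
      rcases lt_or_eq_of_le huu with h | h
      · exact h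
      · exact absurd (dotProduct_self_eq_zero.mp h.symm) hu
    nlinarith [mul_le_mul_of_nonneg_right hβ huu, hcs, htinv, hSv, hupos,
      mul_nonneg hc.le hvv]

lemma quad_blocks {k n : ℕ} (A : Matrix (Fin k) (Fin k) ℝ) (B : Matrix (Fin k) (Fin n) ℝ)
    (Cm : Matrix (Fin n) (Fin k) ℝ) (Dm : Matrix (Fin n) (Fin n) ℝ)
    (u : Fin k → ℝ) (v : Fin n → ℝ) :
    (Sum.elim u v) ⬝ᵥ (Matrix.fromBlocks A B Cm Dm).mulVec (Sum.elim u v)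
      = u ⬝ᵥ A.mulVec u + u ⬝ᵥ B.mulVec v + v ⬝ᵥ Cm.mulVec u + v ⬝ᵥ Dm.mulVec v := by
  rw [Matrix.fromBlocks_mulVec, sumElim_dotProduct_sumElim, dotProduct_add,
    dotProduct_add]
  simp only [Sum.elim_comp_inl, Sum.elim_comp_inr]
  ring

lemma dot_tr {a b : ℕ} (M : Matrix (Fin a) (Fin b) ℝ) (u : Fin b → ℝ) (v : Fin a → ℝ) :
    v ⬝ᵥ M.mulVec u = u ⬝ᵥ Mᵀ.mulVec v := by
  rw [Matrix.dotProduct_mulVec u, Matrix.vecMul_transpose, dotProduct_comm]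


/-- feasibility of the observer-design LMI for the original system implies
feasibility of the LMI for the filtered (augmented) system. -/
theorem stmt_12 {n k : ℕ} (ρ : ℝ) (hρ : 0 < ρ)
    (A₀ G : Matrix (Fin n) (Fin n) ℝ) (C : Matrix (Fin k) (Fin n) ℝ)
    (hex : ∃ (P : Matrix (Fin n) (Fin n) ℝ) (Y : Matrix (Fin n) (Fin k) ℝ),
      P.IsSymm ∧
      (∀ x : Fin n → ℝ, x ≠ 0 → 0 < x ⬝ᵥ P.mulVec x) ∧
      (∀ x : Fin n → ℝ,
        x ⬝ᵥ (P * A₀ + A₀ᵀ * P + Y * C + Cᵀ * Yᵀ + (2 * ρ) • (P * G + Gᵀ * P)).mulVec x ≤ 0) ∧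
      (∀ x : Fin n → ℝ, x ≠ 0 → 0 < x ⬝ᵥ (P * G + Gᵀ * P).mulVec x)) :
    let Gbar : Matrix (Fin k ⊕ Fin n) (Fin k ⊕ Fin n) ℝ := Matrix.fromBlocks 1 0 0 G
    let Abar : Matrix (Fin k ⊕ Fin n) (Fin k ⊕ Fin n) ℝ := Matrix.fromBlocks 0 C 0 A₀
    let Cbar : Matrix (Fin k) (Fin k ⊕ Fin n) ℝ := Matrix.fromCols 1 0
    ∃ (Pbar : Matrix (Fin k ⊕ Fin n) (Fin k ⊕ Fin n) ℝ)
      (Ybar : Matrix (Fin k ⊕ Fin n) (Fin k) ℝ),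
      Pbar.IsSymm ∧
      (∀ x : Fin k ⊕ Fin n → ℝ, x ≠ 0 → 0 < x ⬝ᵥ Pbar.mulVec x) ∧
      (∀ x : Fin k ⊕ Fin n → ℝ,
        x ⬝ᵥ (Pbar * Abar + Abarᵀ * Pbar + Ybar * Cbar + Cbarᵀ * Ybarᵀ +
          ρ • (Pbar * Gbar + Gbarᵀ * Pbar)).mulVec x ≤ 0) ∧
      (∀ x : Fin k ⊕ Fin n → ℝ, x ≠ 0 → 0 < x ⬝ᵥ (Pbar * Gbar + Gbarᵀ * Pbar).mulVec x) := by
  intro Gbar Abar Cbar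
  obtain ⟨P, Y, hPsym, hPpos, hLMI, hDpos⟩ := hex
  set D : Matrix (Fin n) (Fin n) ℝ := P * G + Gᵀ * P with hD
  set Sg : Matrix (Fin n) (Fin n) ℝ :=
    P * A₀ + A₀ᵀ * P + Y * C + Cᵀ * Yᵀ + (2 * ρ) • (P * G + Gᵀ * P) with hSg
  obtain ⟨α₁, hα₁, hkey₁⟩ := key Yᵀ P hPpos
  obtain ⟨α₂, hα₂, hkey₂⟩ := key (Yᵀ * G + Yᵀ) D hDpos
  set α : ℝ := α₁ + α₂ with hα
  have hαpos : 0 < α := by positivity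
  set Pbar : Matrix (Fin k ⊕ Fin n) (Fin k ⊕ Fin n) ℝ :=
    Matrix.fromBlocks (α • 1) Yᵀ Y P with hPbar
  set Y₂ : Matrix (Fin n) (Fin k) ℝ := -(α • Cᵀ + A₀ᵀ * Y + ρ • (Gᵀ * Y + Y)) with hY₂
  set Ybar : Matrix (Fin k ⊕ Fin n) (Fin k) ℝ :=
    Matrix.fromRows ((-(ρ * α)) • (1 : Matrix (Fin k) (Fin k) ℝ)) Y₂ with hYbar
  -- block identity for the G-term
  have hGsum : Pbar * Gbar + Gbarᵀ * Pbar
      = Matrix.fromBlocks ((2 * α) • 1) (Yᵀ * G + Yᵀ) (Gᵀ * Y + Y) D := by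
    rw [hPbar]
    show Matrix.fromBlocks (α • 1) Yᵀ Y P * Matrix.fromBlocks 1 0 0 G
        + (Matrix.fromBlocks 1 0 0 G)ᵀ * Matrix.fromBlocks (α • 1) Yᵀ Y P = _
    rw [Matrix.fromBlocks_transpose, Matrix.fromBlocks_multiply, Matrix.fromBlocks_multiply,
      Matrix.fromBlocks_add]
    rw [Matrix.fromBlocks_inj]
    refine ⟨?_, ?_, ?_, ?_⟩
    · simp only [hα, Matrix.smul_mul, Matrix.one_mul, Matrix.mul_one, Matrix.transpose_one,
        Matrix.mul_zero, Matrix.zero_mul, add_zero, zero_add, Matrix.transpose_zero]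
      module
    · simp [Matrix.smul_mul, Matrix.mul_smul]
    · simp [Matrix.smul_mul, Matrix.mul_smul]
      abel
    · simp [hD]
  -- block identity for the LMI matrix
  have hMbar : Pbar * Abar + Abarᵀ * Pbar + Ybar * Cbar + Cbarᵀ * Ybarᵀ
      + ρ • (Pbar * Gbar + Gbarᵀ * Pbar)
      = Matrix.fromBlocks 0 0 0 (Sg - ρ • D) := by
    rw [hGsum, hPbar, hYbar]
    show Matrix.fromBlocks (α • 1) Yᵀ Y P * Matrix.fromBlocks 0 C 0 A₀
        + (Matrix.fromBlocks 0 C 0 A₀)ᵀ * Matrix.fromBlocks (α • 1) Yᵀ Y P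
        + Matrix.fromRows ((-(ρ * α)) • 1) Y₂ * Matrix.fromCols 1 0
        + (Matrix.fromCols 1 0)ᵀ * (Matrix.fromRows ((-(ρ * α)) • 1) Y₂)ᵀ
        + ρ • Matrix.fromBlocks ((2 * α) • 1) (Yᵀ * G + Yᵀ) (Gᵀ * Y + Y) D = _
    simp only [Matrix.transpose_fromCols, Matrix.transpose_fromRows,
      Matrix.fromBlocks_transpose, Matrix.fromRows_mul_fromCols, Matrix.fromBlocks_multiply,
      Matrix.fromBlocks_smul, Matrix.fromBlocks_add, Matrix.transpose_zero, Matrix.transpose_one]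
    rw [Matrix.fromBlocks_inj]
    refine ⟨?_, ?_, ?_, ?_⟩
    · simp [Matrix.smul_mul, smul_smul]
      module
    · simp [hY₂, Matrix.transpose_add, Matrix.transpose_smul, Matrix.smul_mul, Matrix.mul_smul,
        Matrix.transpose_mul, smul_add]
      abel
    · simp [hY₂, Matrix.smul_mul, Matrix.mul_smul, smul_add]
      abel
    · simp [hSg, hD, two_mul, add_smul, smul_add, sub_eq_add_neg]
      abel
  refine ⟨Pbar, Ybar, ?_, ?_, ?_, ?_⟩
  · rw [Matrix.IsSymm, hPbar, Matrix.fromBlocks_transpose, Matrix.transpose_smul,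
      Matrix.transpose_one, Matrix.transpose_transpose, hPsym.eq]
  · intro x hx
    set u := x ∘ Sum.inl with hu
    set v := x ∘ Sum.inr with hv
    have hxe : Sum.elim u v = x := Sum.elim_comp_inl_inr x
    have hne : ¬(u = 0 ∧ v = 0) := by
      rintro ⟨hu0, hv0⟩
      apply hx
      rw [← hxe, hu0, hv0]
      funext i
      cases i <;> simp
    rw [hPbar, ← hxe, quad_blocks]
    have h1 : u ⬝ᵥ (α • (1 : Matrix (Fin k) (Fin k) ℝ)).mulVec u = α * (u ⬝ᵥ u) := by
      rw [Matrix.smul_mulVec, Matrix.one_mulVec, dotProduct_smul, smul_eq_mul]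
    rw [h1, dot_tr Y u v]
    have := hkey₁ α (by linarith) u v hne
    linarith
  · intro x
    set u := x ∘ Sum.inl with hu
    set v := x ∘ Sum.inr with hv
    have hxe : Sum.elim u v = x := Sum.elim_comp_inl_inr x
    rw [hMbar, ← hxe, quad_blocks]
    simp only [Matrix.zero_mulVec, dotProduct_zero, zero_add, add_zero]
    rw [Matrix.sub_mulVec, dotProduct_sub, Matrix.smul_mulVec, dotProduct_smul,
      smul_eq_mul]
    have h1 := hLMI v
    have h2 : 0 ≤ v ⬝ᵥ D.mulVec v := by
      rcases eq_or_ne v 0 with h | h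
      · simp [h]
      · exact (hDpos v h).le
    nlinarith
  · intro x hx
    set u := x ∘ Sum.inl with hu
    set v := x ∘ Sum.inr with hv
    have hxe : Sum.elim u v = x := Sum.elim_comp_inl_inr x
    have hne : ¬(u = 0 ∧ v = 0) := by
      rintro ⟨hu0, hv0⟩
      apply hx
      rw [← hxe, hu0, hv0]
      funext i
      cases i <;> simp
    rw [hGsum, ← hxe, quad_blocks]
    have h1 : u ⬝ᵥ ((2 * α) • (1 : Matrix (Fin k) (Fin k) ℝ)).mulVec u
        = (2 * α) * (u ⬝ᵥ u) := by
      rw [Matrix.smul_mulVec, Matrix.one_mulVec, dotProduct_smul, smul_eq_mul]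
    have htr : v ⬝ᵥ (Gᵀ * Y + Y).mulVec u = u ⬝ᵥ (Yᵀ * G + Yᵀ).mulVec v := by
      rw [dot_tr (Gᵀ * Y + Y) u v, Matrix.transpose_add, Matrix.transpose_mul,
        Matrix.transpose_transpose]
    rw [h1, htr]
    have := hkey₂ (2 * α) (by linarith) u v hne
    linarith
end

section
/- Let ν ∈ (−2, 0) and γ > 0. Let δ : [0,∞) → ℝ be differentiable and satisfy δ'(t) ≥ −γ·⌊δ(t)⌉^{1+ν/2} for all t ≥ 0. Then δ(t) ≥ 0 for all t ≥ T_δ, where T_δ = 2·(max{0, −δ(0)})^{−ν/2}/(−ν·γ). In particular, if δ(0) ≥ 0 then δ(t) ≥ 0 for all t ≥ 0. -/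
/-- The signed power `⌊a⌉^p = |a|^p · sign a`. -/
noncomputable def spow (a p : ℝ) : ℝ := |a| ^ p * Real.sign a

lemma spow_nonpos_of_nonpos (x p : ℝ) (hx : x ≤ 0) : spow x p ≤ 0 := by
  rcases lt_or_eq_of_le hx with h | h
  · simp only [spow, Real.sign_of_neg h]
    have : (0:ℝ) ≤ |x| ^ p := Real.rpow_nonneg (abs_nonneg x) p
    nlinarith
  · subst h
    simp [spow]

lemma spow_of_neg (x p : ℝ) (hx : x < 0) : spow x p = -((-x) ^ p) := by
  simp [spow, Real.sign_of_neg hx, abs_of_neg hx]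

/-- if `δ' ≥ -γ ⌊δ⌉^{1+ν/2}` on `[0, ∞)` with `ν ∈ (-2, 0)`, then
`δ(t) ≥ 0` for all `t ≥ T_δ = 2 (max 0 (-δ(0)))^{-ν/2} / (-ν γ)`. -/
theorem stmt_16 (ν γ : ℝ) (hν : ν ∈ Set.Ioo (-2 : ℝ) 0) (hγ : 0 < γ)
    (δ δ' : ℝ → ℝ)
    (hder : ∀ t : ℝ, 0 ≤ t → HasDerivAt δ (δ' t) t)
    (hineq : ∀ t : ℝ, 0 ≤ t → -γ * spow (δ t) (1 + ν / 2) ≤ δ' t) :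
    (∀ t : ℝ, 2 * (max 0 (-δ 0)) ^ (-(ν / 2)) / (-ν * γ) ≤ t → 0 ≤ δ t) ∧
    (0 ≤ δ 0 → ∀ t : ℝ, 0 ≤ t → 0 ≤ δ t) := by
  obtain ⟨hν1, hν2⟩ := hν
  have hcont : ∀ t : ℝ, 0 ≤ t → ContinuousAt δ t := fun t ht => (hder t ht).continuousAt
  have hder_nonneg : ∀ r : ℝ, 0 ≤ r → δ r ≤ 0 → 0 ≤ δ' r := by
    intro r hr hδr
    have h1 := hineq r hr
    have h2 : spow (δ r) (1 + ν / 2) ≤ 0 := spow_nonpos_of_nonpos _ _ hδr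
    nlinarith
  -- Key invariance: if δ s ≥ 0 for some s ≥ 0, then δ t ≥ 0 for all t ≥ s.
  have key : ∀ s : ℝ, 0 ≤ s → 0 ≤ δ s → ∀ t : ℝ, s ≤ t → 0 ≤ δ t := by
    intro s hs hδs t hst
    by_contra hneg
    push_neg at hneg
    have hst' : s < t := lt_of_le_of_ne hst (by
      intro heq; rw [heq] at hδs; exact absurd hδs (not_le.2 hneg))
    set S : Set ℝ := Set.Icc s t ∩ δ ⁻¹' (Set.Ici 0) with hSdef
    have hScl : IsClosed S := by
      have hco : ContinuousOn δ (Set.Icc s t) := fun x hx =>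
        (hcont x (le_trans hs hx.1)).continuousWithinAt
      exact hco.preimage_isClosed_of_isClosed isClosed_Icc isClosed_Ici
    have hSne : S.Nonempty := ⟨s, ⟨le_refl s, hst⟩, hδs⟩
    have hScomp : IsCompact S :=
      IsCompact.of_isClosed_subset isCompact_Icc hScl Set.inter_subset_left
    set c := sSup S with hcdef
    have hcS : c ∈ S := hScomp.sSup_mem hSne
    obtain ⟨⟨hsc, hct⟩, hδc⟩ := hcS
    have hδc' : 0 ≤ δ c := hδc
    have hc0 : 0 ≤ c := le_trans hs hsc
    have hclt : c < t := lt_of_le_of_ne hct (by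
      intro heq; rw [heq] at hδc'; exact absurd hδc' (not_le.2 hneg))
    have hAllNeg : ∀ r : ℝ, c < r → r ≤ t → δ r < 0 := by
      intro r hcr hrt
      by_contra hr
      push_neg at hr
      have : r ∈ S := ⟨⟨le_trans hsc hcr.le, hrt⟩, hr⟩
      exact absurd (le_csSup hScomp.bddAbove this) (not_le.2 hcr)
    -- δ c = 0
    have hδc0 : δ c = 0 := by
      by_contra h
      have hpos : 0 < δ c := lt_of_le_of_ne hδc' (Ne.symm h)
      have hev : δ ⁻¹' Set.Ioi 0 ∈ nhds c := (hcont c hc0) (isOpen_Ioi.mem_nhds hpos)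
      have hev' : ∀ᶠ x in nhdsWithin c (Set.Ioi c), 0 < δ x :=
        eventually_nhdsWithin_of_eventually_nhds hev
      have hev2 : ∀ᶠ x in nhdsWithin c (Set.Ioi c), x < t :=
        eventually_nhdsWithin_of_eventually_nhds (Filter.Tendsto.eventually_lt_const hclt
          Filter.tendsto_id)
      have hev3 : ∀ᶠ x in nhdsWithin c (Set.Ioi c), x ∈ Set.Ioi c := self_mem_nhdsWithin
      obtain ⟨r, hr1, hr2, hr3⟩ := (hev'.and (hev2.and hev3)).exists
      have := hAllNeg r hr3 hr2.le
      linarith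
    -- δ is monotone on [c, t]
    have hmono : MonotoneOn δ (Set.Icc c t) := by
      apply monotoneOn_of_deriv_nonneg (convex_Icc c t)
      · exact fun x hx => (hcont x (le_trans hc0 hx.1)).continuousWithinAt
      · intro x hx
        rw [interior_Icc] at hx
        exact (hder x (le_trans hc0 hx.1.le)).differentiableAt.differentiableWithinAt
      · intro x hx
        rw [interior_Icc] at hx
        rw [(hder x (le_trans hc0 hx.1.le)).deriv]
        exact hder_nonneg x (le_trans hc0 hx.1.le) (hAllNeg x hx.1 hx.2.le).le
    have := hmono ⟨le_refl c, hclt.le⟩ ⟨hclt.le, le_refl t⟩ hclt.le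
    rw [hδc0] at this
    exact absurd this (not_le.2 hneg)
  refine ⟨?_, fun h0 t ht => key 0 le_rfl h0 t ht⟩
  intro t hTt
  -- abbreviations
  set q : ℝ := -(ν / 2) with hqdef
  have hq : 0 < q := by simp [hqdef]; linarith
  set g0 : ℝ := (max 0 (-δ 0)) ^ q with hg0def
  have hg0 : 0 ≤ g0 := Real.rpow_nonneg (le_max_left _ _) q
  have hT0 : (0:ℝ) ≤ 2 * g0 / (-ν * γ) := by
    apply div_nonneg (by linarith)
    nlinarith
  have ht0 : 0 ≤ t := le_trans hT0 hTt
  by_cases hex : ∃ s : ℝ, 0 ≤ s ∧ s ≤ t ∧ 0 ≤ δ s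
  · obtain ⟨s, hs0, hst, hδs⟩ := hex
    exact key s hs0 hδs t hst
  push_neg at hex
  exfalso
  have hneg : ∀ s : ℝ, 0 ≤ s → s ≤ t → δ s < 0 := fun s h1 h2 => hex s h1 h2
  have hδ0 : δ 0 < 0 := hneg 0 le_rfl ht0
  have hmax : max 0 (-δ 0) = -δ 0 := max_eq_right (by linarith)
  set cc : ℝ := q * γ with hccdef
  have hcc : 0 < cc := mul_pos hq hγ
  -- h r := (-δ r)^q + cc * r
  set h : ℝ → ℝ := fun r => (-δ r) ^ q + cc * r with hhdef
  have hH : ∀ r : ℝ, 0 ≤ r → r ≤ t →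
      HasDerivAt h ((-δ' r) * q * (-δ r) ^ (q - 1) + cc) r := by
    intro r hr1 hr2
    have hδr : δ r < 0 := hneg r hr1 hr2
    have h1 : HasDerivAt (fun x => -δ x) (-δ' r) r := (hder r hr1).neg
    have h2 := h1.rpow_const (p := q) (Or.inl (by linarith : -δ r ≠ 0))
    have h3 : HasDerivAt (fun x : ℝ => cc * x) cc r := by
      simpa using (hasDerivAt_id r).const_mul cc
    exact h2.add h3
  have hderiv_le : ∀ r : ℝ, 0 < r → r < t →
      (-δ' r) * q * (-δ r) ^ (q - 1) + cc ≤ 0 := by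
    intro r hr1 hr2
    have hδr : δ r < 0 := hneg r hr1.le hr2.le
    have hpos : 0 < -δ r := by linarith
    have hie := hineq r hr1.le
    rw [spow_of_neg _ _ hδr] at hie
    -- hie : -γ * -((-δ r)^(1+ν/2)) ≤ δ' r, i.e. γ (-δ r)^p ≤ δ' r
    have hie' : γ * (-δ r) ^ (1 + ν / 2) ≤ δ' r := by linarith
    have hqpow : 0 < (-δ r) ^ (q - 1) := Real.rpow_pos_of_pos hpos _
    have hmul : (-δ' r) * q * (-δ r) ^ (q - 1)
        ≤ (-(γ * (-δ r) ^ (1 + ν / 2))) * q * (-δ r) ^ (q - 1) := by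
      have : -δ' r ≤ -(γ * (-δ r) ^ (1 + ν / 2)) := by linarith
      have hnn : 0 ≤ q * (-δ r) ^ (q - 1) := le_of_lt (mul_pos hq hqpow)
      nlinarith [mul_le_mul_of_nonneg_right this hnn]
    have hcombine : (-(γ * (-δ r) ^ (1 + ν / 2))) * q * (-δ r) ^ (q - 1) = -cc := by
      have : (-δ r) ^ (1 + ν / 2) * (-δ r) ^ (q - 1) = 1 := by
        rw [← Real.rpow_add hpos]
        have : 1 + ν / 2 + (q - 1) = 0 := by simp [hqdef]; ring
        rw [this, Real.rpow_zero]
      calc (-(γ * (-δ r) ^ (1 + ν / 2))) * q * (-δ r) ^ (q - 1)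
          = -(γ * q) * ((-δ r) ^ (1 + ν / 2) * (-δ r) ^ (q - 1)) := by ring
        _ = -(γ * q) * 1 := by rw [this]
        _ = -cc := by rw [hccdef]; ring
    linarith [hmul.trans_eq hcombine]
  have hanti : AntitoneOn h (Set.Icc 0 t) := by
    apply antitoneOn_of_deriv_nonpos (convex_Icc 0 t)
    · exact fun x hx => (hH x hx.1 hx.2).continuousAt.continuousWithinAt
    · intro x hx
      rw [interior_Icc] at hx
      exact (hH x hx.1.le hx.2.le).differentiableAt.differentiableWithinAt
    · intro x hx
      rw [interior_Icc] at hx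
      rw [(hH x hx.1.le hx.2.le).deriv]
      exact hderiv_le x hx.1 hx.2
  have hht : h t ≤ h 0 := hanti ⟨le_rfl, ht0⟩ ⟨ht0, le_rfl⟩ ht0
  have hh0 : h 0 = g0 := by
    simp only [hhdef, hg0def, hmax, mul_zero, add_zero]
  have hccT : g0 ≤ cc * t := by
    have hν0 : ν ≠ 0 := ne_of_lt hν2
    have hγ0 : γ ≠ 0 := ne_of_gt hγ
    have h1 : cc * (2 * g0 / (-ν * γ)) = (cc * 2 / (-ν * γ)) * g0 := by ring
    have h2 : cc * 2 / (-ν * γ) = 1 := by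
      rw [hccdef, hqdef]
      field_simp
    have hccT' : cc * (2 * g0 / (-ν * γ)) = g0 := by rw [h1, h2, one_mul]
    calc g0 = cc * (2 * g0 / (-ν * γ)) := hccT'.symm
      _ ≤ cc * t := mul_le_mul_of_nonneg_left hTt hcc.le
  have hgt : 0 < (-δ t) ^ q := Real.rpow_pos_of_pos (by linarith [hneg t ht0 le_rfl]) q
  have : (-δ t) ^ q + cc * t ≤ g0 := by rw [← hh0]; exact hht
  linarith
end

section
/- Let G be a real n×n matrix, μ ∈ ℝ, and V : ℝⁿ → ℝ be differentiable at every point of ℝⁿ∖{0} and satisfy the homogeneity identity V(exp(sG)·x) = e^{μs}·V(x) for all s ∈ ℝ and all x ∈ ℝⁿ. Let E ∈ ℝⁿ satisfy exp(sG)·E = e^{μs}·E for all s ∈ ℝ. Then the directional derivative of V along E is invariant under the dilation: for every x ≠ 0 and every s ∈ ℝ, DV(exp(sG)·x)(E) = DV(x)(E), where DV(y) denotes the Fréchet derivative of V at y. Consequently the function x ↦ DV(x)(E) is bounded on ℝⁿ∖{0} by its supremum over the unit sphere whenever every dilation orbit {exp(sG)x : s ∈ ℝ} with x ≠ 0 meets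 the unit sphere. -/
open Matrix

/-- invariance of the directional derivative of a `d`-homogeneous function
along a direction `E` sharing the dilation symmetry, and the resulting boundedness of
`x ↦ DV(x)(E)` by its values on the unit sphere. -/
theorem stmt_17 {n : ℕ} (G : Matrix (Fin n) (Fin n) ℝ) (μ : ℝ)
    (V : (Fin n → ℝ) → ℝ)
    (hdiff : ∀ x : Fin n → ℝ, x ≠ 0 → DifferentiableAt ℝ V x)
    (hhom : ∀ (s : ℝ) (x : Fin n → ℝ),
      V ((NormedSpace.exp (s • G)).mulVec x) = Real.exp (μ * s) * V x)
    (E : Fin n → ℝ)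
    (hE : ∀ s : ℝ, (NormedSpace.exp (s • G)).mulVec E = Real.exp (μ * s) • E) :
    (∀ x : Fin n → ℝ, x ≠ 0 → ∀ s : ℝ,
      fderiv ℝ V ((NormedSpace.exp (s • G)).mulVec x) E = fderiv ℝ V x E) ∧
    ((∀ x : Fin n → ℝ, x ≠ 0 →
        ∃ s : ℝ, ‖(NormedSpace.exp (s • G)).mulVec x‖ = 1) →
      ∀ x : Fin n → ℝ, x ≠ 0 →
        ∃ y : Fin n → ℝ, ‖y‖ = 1 ∧ fderiv ℝ V x E = fderiv ℝ V y E) := by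
  have hne : ∀ (s : ℝ) (x : Fin n → ℝ), x ≠ 0 →
      (NormedSpace.exp (s • G)).mulVec x ≠ 0 := by
    intro s x hx h0
    have hinv : NormedSpace.exp (-s • G) * NormedSpace.exp (s • G) = 1 := by
      rw [← Matrix.exp_add_of_commute (-s • G) (s • G)
        (((Commute.refl G).smul_left (-s)).smul_right s)]
      simp
    have : (NormedSpace.exp (-s • G)).mulVec ((NormedSpace.exp (s • G)).mulVec x) = x := by
      rw [Matrix.mulVec_mulVec, hinv, Matrix.one_mulVec]
    rw [h0] at this
    simp [Matrix.mulVec_zero] at this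
    exact hx this.symm
  have key : ∀ x : Fin n → ℝ, x ≠ 0 → ∀ s : ℝ,
      fderiv ℝ V ((NormedSpace.exp (s • G)).mulVec x) E = fderiv ℝ V x E := by
    intro x hx s
    set A := NormedSpace.exp (s • G) with hA
    set c := Real.exp (μ * s) with hc
    have hc0 : c ≠ 0 := Real.exp_ne_zero _
    set L : (Fin n → ℝ) →L[ℝ] (Fin n → ℝ) :=
      LinearMap.toContinuousLinearMap A.mulVecLin with hL
    have hLapp : ∀ v, L v = A.mulVec v := fun v => rfl
    have h1 : HasFDerivAt (fun y => V (A.mulVec y))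
        ((fderiv ℝ V (A.mulVec x)).comp L) x := by
      have := ((hdiff _ (hne s x hx)).hasFDerivAt).comp x (L.hasFDerivAt (x := x))
      exact this
    have h2 : HasFDerivAt (fun y => V (A.mulVec y)) (c • fderiv ℝ V x) x := by
      have := ((hdiff x hx).hasFDerivAt).const_mul c
      have heq : (fun y => V (A.mulVec y)) = fun y => c * V y := by
        funext y; exact hhom s y
      rw [heq]
      exact this
    have hder := h1.unique h2
    have := congrArg (fun (T : (Fin n → ℝ) →L[ℝ] ℝ) => T E) hder
    simp only [ContinuousLinearMap.comp_apply, ContinuousLinearMap.smul_apply] at this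
    rw [hLapp, hE s] at this
    rw [ContinuousLinearMap.map_smul] at this
    simpa [smul_eq_mul, hc] using this
  refine ⟨key, fun hsphere x hx => ?_⟩
  obtain ⟨s, hs⟩ := hsphere x hx
  exact ⟨(NormedSpace.exp (s • G)).mulVec x, hs, (key x hx s).symm⟩
end
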